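/- arXiv:1712.05883 — 5 statements merged into one kernel-verified Lean document; each statement's English description precedes it below -/
import Mathlib

section
/- Let n ≥ 3, let G_n be the straight linear 2-tree on n vertices, and let m = n − 2. Then the resistance distance between the extreme vertices 1 and n satisfies r_{G_n}(1, n) = 2·F_{m+1}² / (L_{m+1}·L_m) + Σ_{i=1}^{m−1} F_i·F_{i+1} / (L_i·L_{i+1}). -/
/-- The straight linear 2-tree on `n` vertices: vertices `0, …, n-1` (representing
`1, …, n`), with distinct vertices adjacent iff they differ by at most 2. -/
def linear2Tree (n : ℕ) : SimpleGraph (Fin n) where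
  Adj i j := i ≠ j ∧ i.val ≤ j.val + 2 ∧ j.val ≤ i.val + 2
  symm := by
    constructor
    intro i j h
    exact ⟨h.1.symm, h.2.2, h.2.1⟩
  loopless := by
    constructor
    intro i h
    exact h.1 rfl

open scoped Classical in
/-- The combinatorial Laplacian (degree matrix minus adjacency matrix) of a graph on `Fin n`. -/
noncomputable def lap {n : ℕ} (G : SimpleGraph (Fin n)) : Matrix (Fin n) (Fin n) ℝ :=
  Matrix.of fun a b =>
    if a = b then ∑ c : Fin n, (if G.Adj a c then (1 : ℝ) else 0)
    else if G.Adj a b then -1 else 0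

/-- The source vector `e_i - e_j`. -/
def esrc {n : ℕ} (i j : Fin n) : Fin n → ℝ :=
  fun t => (if t = i then 1 else 0) - (if t = j then 1 else 0)

/-- `IsResistance G i j r` says: a solution `v` of `L v = e_i - e_j` exists, and every such
solution satisfies `r = v i - v j`; i.e. the resistance distance between `i` and `j` is `r`. -/
def IsResistance {n : ℕ} (G : SimpleGraph (Fin n)) (i j : Fin n) (r : ℝ) : Prop :=
  (∃ v : Fin n → ℝ, (lap G).mulVec v = esrc i j) ∧
  ∀ v : Fin n → ℝ, (lap G).mulVec v = esrc i j → r = v i - v j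

/-- Fibonacci numbers extended to integer indices, with `F_{-p} = (-1)^{p+1} F_p`. -/
def fibZ (k : ℤ) : ℤ :=
  if 0 ≤ k then (Nat.fib k.toNat : ℤ)
  else (-1) ^ ((-k).toNat + 1) * (Nat.fib (-k).toNat : ℤ)

/-- The Lucas numbers: `L_0 = 2`, `L_1 = 1`, `L_{n+2} = L_{n+1} + L_n`. -/
def lucas : ℕ → ℕ
  | 0 => 2
  | 1 => 1
  | n + 2 => lucas (n + 1) + lucas n

noncomputable def phiR : ℝ := (1 + Real.sqrt 5) / 2
noncomputable def psiR : ℝ := (1 - Real.sqrt 5) / 2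
lemma sqrt5_pos : (0:ℝ) < Real.sqrt 5 := Real.sqrt_pos.2 (by norm_num)
lemma sqrt5_sq : Real.sqrt 5 * Real.sqrt 5 = 5 := Real.mul_self_sqrt (by norm_num)
lemma phiR_pos : 0 < phiR := by have := sqrt5_pos; unfold phiR; linarith
lemma phiR_ne : phiR ≠ 0 := ne_of_gt phiR_pos
lemma psiR_ne : psiR ≠ 0 := by
  have h := sqrt5_sq
  have : psiR < 0 := by unfold psiR; nlinarith [sqrt5_pos]
  exact ne_of_lt this
lemma phi_mul_psi : phiR * psiR = -1 := by
  unfold phiR psiR; have := sqrt5_sq; nlinarith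
noncomputable def fibR (t : ℤ) : ℝ := (phiR ^ t - psiR ^ t) / Real.sqrt 5
noncomputable def lucR (t : ℤ) : ℝ := phiR ^ t + psiR ^ t


-- two-step induction helper
lemma two_step {P : ℕ → Prop} (h0 : P 0) (h1 : P 1)
    (ih : ∀ k, P k → P (k+1) → P (k+2)) : ∀ p, P p := by
  have key : ∀ p, P p ∧ P (p+1) := by
    intro p
    induction p with
    | zero => exact ⟨h0, h1⟩
    | succ k ih' => exact ⟨ih'.2, ih k ih'.1 ih'.2⟩
  exact fun p => (key p).1

lemma phiR_zpow_add_two (t : ℤ) : phiR ^ (t+2) = phiR ^ (t+1) + phiR ^ t := by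
  rw [zpow_add₀ phiR_ne, zpow_add₀ phiR_ne]
  have h : phiR ^ (2:ℤ) = phiR ^ (1:ℤ) + 1 := by
    rw [zpow_two, zpow_one]; unfold phiR; have := sqrt5_sq; nlinarith
  rw [h, zpow_one]; ring
lemma psiR_zpow_add_two (t : ℤ) : psiR ^ (t+2) = psiR ^ (t+1) + psiR ^ t := by
  rw [zpow_add₀ psiR_ne, zpow_add₀ psiR_ne]
  have h : psiR ^ (2:ℤ) = psiR ^ (1:ℤ) + 1 := by
    rw [zpow_two, zpow_one]; unfold psiR; have := sqrt5_sq; nlinarith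
  rw [h, zpow_one]; ring
lemma lucR_rec (t : ℤ) : lucR (t+2) = lucR (t+1) + lucR t := by
  unfold lucR; rw [phiR_zpow_add_two, psiR_zpow_add_two]; ring
lemma fibR_rec (t : ℤ) : fibR (t+2) = fibR (t+1) + fibR t := by
  unfold fibR; rw [phiR_zpow_add_two, psiR_zpow_add_two]; ring
lemma lucR_rec' (t : ℤ) : lucR t = lucR (t-1) + lucR (t-2) := by
  have h := lucR_rec (t-2)
  rw [show t-2+2 = t by ring, show t-2+1 = t-1 by ring] at h
  exact h

lemma lucR_coe : ∀ p : ℕ, lucR (p : ℤ) = (lucas p : ℝ) := by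
  apply two_step
  · show lucR 0 = ((2:ℕ):ℝ)
    unfold lucR; norm_num
  · show lucR 1 = ((1:ℕ):ℝ)
    unfold lucR; rw [zpow_one, zpow_one]
    unfold phiR psiR; push_cast; ring
  · intro k hk hk1
    have : ((k+2:ℕ):ℤ) = (k:ℤ) + 2 := by push_cast; ring
    rw [this, lucR_rec]
    rw [show ((k:ℤ)+1) = ((k+1:ℕ):ℤ) by push_cast; ring, hk, hk1]
    show _ = ((lucas (k+1) + lucas k : ℕ) : ℝ)
    push_cast; ring

lemma fibR_coe : ∀ p : ℕ, fibR (p : ℤ) = (Nat.fib p : ℝ) := by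
  apply two_step
  · show fibR 0 = ((Nat.fib 0:ℕ):ℝ)
    unfold fibR; norm_num
  · show fibR 1 = ((Nat.fib 1:ℕ):ℝ)
    unfold fibR; rw [zpow_one, zpow_one]
    rw [show phiR - psiR = Real.sqrt 5 by unfold phiR psiR; ring]
    rw [div_self (ne_of_gt sqrt5_pos)]; norm_num
  · intro k hk hk1
    have : ((k+2:ℕ):ℤ) = (k:ℤ) + 2 := by push_cast; ring
    rw [this, fibR_rec]
    rw [show ((k:ℤ)+1) = ((k+1:ℕ):ℤ) by push_cast; ring, hk, hk1, Nat.fib_add_two]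
    push_cast; ring

-- reflection
lemma phiR_inv : phiR⁻¹ = -psiR :=
  inv_eq_of_mul_eq_one_right (by linear_combination -phi_mul_psi)
lemma psiR_inv : psiR⁻¹ = -phiR :=
  inv_eq_of_mul_eq_one_right (by linear_combination -phi_mul_psi)
lemma psiR_zpow (t : ℤ) : psiR ^ t = (-1:ℝ) ^ t * phiR ^ (-t) := by
  have h : psiR = (-1) * phiR⁻¹ := by rw [phiR_inv]; ring
  rw [h, mul_zpow, inv_zpow, ← zpow_neg]
lemma phiR_zpow (t : ℤ) : phiR ^ t = (-1:ℝ) ^ t * psiR ^ (-t) := by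
  have h : phiR = (-1) * psiR⁻¹ := by rw [psiR_inv]; ring
  nth_rewrite 1 [h]
  rw [mul_zpow, inv_zpow, ← zpow_neg]
lemma neg_one_zpow_mul_self (t : ℤ) : ((-1:ℝ) ^ t) * ((-1:ℝ) ^ t) = 1 := by
  rw [← mul_zpow]; norm_num
lemma lucR_neg (t : ℤ) : lucR (-t) = (-1:ℝ) ^ t * lucR t := by
  unfold lucR
  rw [mul_add]
  nth_rewrite 2 [psiR_zpow]
  nth_rewrite 2 [phiR_zpow]
  rw [← mul_assoc, ← mul_assoc, neg_one_zpow_mul_self]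
  ring
lemma fibR_neg (t : ℤ) : fibR (-t) = -((-1:ℝ) ^ t * fibR t) := by
  unfold fibR
  have e1 : phiR ^ (-t) = (-1:ℝ)^t * psiR ^ t := by
    rw [psiR_zpow, ← mul_assoc, neg_one_zpow_mul_self, one_mul]
  have e2 : psiR ^ (-t) = (-1:ℝ)^t * phiR ^ t := by
    rw [phiR_zpow, ← mul_assoc, neg_one_zpow_mul_self, one_mul]
  rw [e1, e2]; ring

-- bridge
lemma zpow_add_one' (a : ℝ) (ha : a ≠ 0) (t : ℤ) : a ^ (t+1) = a ^ t * a := by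
  rw [zpow_add₀ ha, zpow_one]
lemma zpow_sub_one' (a : ℝ) (ha : a ≠ 0) (t : ℤ) : a ^ (t-1) = a ^ t * a⁻¹ := by
  rw [zpow_sub₀ ha, zpow_one]; rfl

lemma bridge (t : ℤ) : fibR (t+1) + fibR (t-1) = lucR t := by
  unfold fibR lucR
  rw [zpow_add_one' _ phiR_ne, zpow_add_one' _ psiR_ne,
      zpow_sub_one' _ phiR_ne, zpow_sub_one' _ psiR_ne]
  rw [phiR_inv, psiR_inv]
  have hs := ne_of_gt sqrt5_pos
  rw [← add_div, div_eq_iff hs]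
  have hps : phiR - psiR = Real.sqrt 5 := by unfold phiR psiR; ring
  linear_combination (phiR ^ t + psiR ^ t) * hps

lemma neg_one_ne : (-1:ℝ) ≠ 0 := by norm_num
lemma neg_one_zpow_even (t : ℤ) : (-1:ℝ)^(2*t) = 1 := by
  rw [zpow_mul]; norm_num
lemma neg_one_zpow_odd (t : ℤ) : (-1:ℝ)^(2*t+1) = -1 := by
  rw [zpow_add₀ neg_one_ne, neg_one_zpow_even, zpow_one]; ring

lemma E_reflect (k : ℕ) (s : ℤ) : (-1:ℝ)^k * lucR (s - 2*(k:ℤ)) = (-1:ℝ)^(3*(k:ℤ) - s) * lucR (2*(k:ℤ) - s) := by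
  rw [show s - 2*(k:ℤ) = -(2*(k:ℤ) - s) by ring, lucR_neg, ← zpow_natCast (-1:ℝ) k, ← mul_assoc,
      ← zpow_add₀ neg_one_ne, show (k:ℤ) + (2*(k:ℤ) - s) = 3*(k:ℤ) - s by ring]

lemma lucR_shift (a : ℤ) : lucR (a+1) = lucR a + lucR (a-1) := by
  have h := lucR_rec (a-1)
  rw [show a-1+2 = a+1 by ring, show a-1+1 = a by ring] at h
  exact h

lemma lucas_pos : ∀ p, 0 < lucas p := by
  apply two_step
  · norm_num [lucas]
  · norm_num [lucas]
  · intro k h1 h2; show 0 < lucas (k+1) + lucas k; omega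

lemma lucasR_pos (p : ℕ) : (0:ℝ) < (lucas p : ℝ) := by exact_mod_cast lucas_pos p
lemma lucasR_ne (p : ℕ) : ((lucas p : ℝ)) ≠ 0 := ne_of_gt (lucasR_pos p)

lemma lucas_lucR (p : ℕ) : ((lucas p : ℕ) : ℝ) = lucR (p : ℤ) := (lucR_coe p).symm

noncomputable def dd (m k : ℕ) : ℝ :=
  ((lucas (m+1) : ℝ) + 2*((-1:ℝ)^k * lucR ((m:ℤ) - 2*(k:ℤ)))) / (5 * (lucas (m+1):ℝ))

lemma hden (m : ℕ) : (5 * (lucas (m+1):ℝ)) ≠ 0 := by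
  have := lucasR_pos (m+1); positivity

-- I0 : 2*dd m 0 + dd m 1 = 1
lemma I0 (m : ℕ) : 2 * dd m 0 + dd m 1 = 1 := by
  have hkey : ((lucas (m+1)):ℝ) = 2*lucR (m:ℤ) - lucR ((m:ℤ)-2) := by
    rw [lucas_lucR, show ((m+1:ℕ):ℤ) = (m:ℤ)+1 by push_cast; ring, lucR_shift,
        show (m:ℤ) = ((m:ℤ)-1)+1 by ring, lucR_shift,
        show (m:ℤ)-1+1 = (m:ℤ) by ring, show (m:ℤ)-1-1 = (m:ℤ)-2 by ring]
    ring
  have h0 : ((m:ℤ) - 2*((0:ℕ):ℤ)) = (m:ℤ) := by push_cast; ring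
  have h1 : ((m:ℤ) - 2*((1:ℕ):ℤ)) = (m:ℤ)-2 := by push_cast; ring
  unfold dd
  rw [h0, h1]
  norm_num
  have hL := lucasR_ne (m+1)
  field_simp
  linear_combination (-2 : ℝ) * hkey

lemma lucR_rec3 (a b c : ℤ) (h1 : b = a-1) (h2 : c = a-2) : lucR a = lucR b + lucR c := by
  subst h1; subst h2; exact lucR_rec' a

-- reduce a signed term to clean form, positive sign version
lemma I1a (m : ℕ) : dd m 0 = 2 * dd m 1 + dd m 2 := by
  have hkey : ((lucas (m+1)):ℝ) = lucR (m:ℤ) + 2*lucR ((m:ℤ)-2) - lucR ((m:ℤ)-4) := by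
    have s1 := lucR_rec3 ((m:ℤ)+1) (m:ℤ) ((m:ℤ)-1) (by ring) (by ring)
    have s2 := lucR_rec3 ((m:ℤ)-1) ((m:ℤ)-2) ((m:ℤ)-3) (by ring) (by ring)
    have s3 := lucR_rec3 ((m:ℤ)-2) ((m:ℤ)-3) ((m:ℤ)-4) (by ring) (by ring)
    rw [lucas_lucR, show ((m+1:ℕ):ℤ) = (m:ℤ)+1 by push_cast; ring]
    linear_combination s1 + s2 - s3
  have A0 : ((-1:ℝ)^(0:ℕ) * lucR ((m:ℤ) - 2*((0:ℕ):ℤ))) = lucR (m:ℤ) := by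
    norm_num
  have A1 : ((-1:ℝ)^(1:ℕ) * lucR ((m:ℤ) - 2*((1:ℕ):ℤ))) = -lucR ((m:ℤ)-2) := by
    norm_num
  have A2 : ((-1:ℝ)^(2:ℕ) * lucR ((m:ℤ) - 2*((2:ℕ):ℤ))) = lucR ((m:ℤ)-4) := by
    norm_num
  unfold dd
  rw [A0, A1, A2]
  have hL := lucasR_ne (m+1)
  field_simp
  linear_combination (-2:ℝ) * hkey

lemma I1b : dd 1 0 = dd 1 1 := by
  have e1 : ((1:ℕ):ℤ) - 2*((0:ℕ):ℤ) = 1 := by norm_num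
  have e2 : ((1:ℕ):ℤ) - 2*((1:ℕ):ℤ) = -1 := by norm_num
  have h : lucR (-1) = -lucR 1 := by
    have := lucR_neg 1
    rw [zpow_one] at this
    linarith [this]
  unfold dd
  rw [e1, e2, h]
  norm_num

lemma I2 (m j : ℕ) : dd m (j+3) + 2 * dd m (j+2) = 2 * dd m (j+1) + dd m j := by
  have s1 := lucR_rec3 ((m:ℤ)-2*j) ((m:ℤ)-2*j-1) ((m:ℤ)-2*j-2) (by ring) (by ring)
  have s2 := lucR_rec3 ((m:ℤ)-2*j-1) ((m:ℤ)-2*j-2) ((m:ℤ)-2*j-3) (by ring) (by ring)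
  have s3 := lucR_rec3 ((m:ℤ)-2*j-2) ((m:ℤ)-2*j-3) ((m:ℤ)-2*j-4) (by ring) (by ring)
  have s4 := lucR_rec3 ((m:ℤ)-2*j-3) ((m:ℤ)-2*j-4) ((m:ℤ)-2*j-5) (by ring) (by ring)
  have s5 := lucR_rec3 ((m:ℤ)-2*j-4) ((m:ℤ)-2*j-5) ((m:ℤ)-2*j-6) (by ring) (by ring)
  have A3 : ((-1:ℝ)^(j+3) * lucR ((m:ℤ) - 2*(((j+3):ℕ):ℤ))) = -((-1:ℝ)^j * lucR ((m:ℤ)-2*j-6)) := by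
    rw [show ((m:ℤ) - 2*(((j+3):ℕ):ℤ)) = (m:ℤ)-2*j-6 by push_cast; ring, pow_add]
    ring
  have A2' : ((-1:ℝ)^(j+2) * lucR ((m:ℤ) - 2*(((j+2):ℕ):ℤ))) = ((-1:ℝ)^j * lucR ((m:ℤ)-2*j-4)) := by
    rw [show ((m:ℤ) - 2*(((j+2):ℕ):ℤ)) = (m:ℤ)-2*j-4 by push_cast; ring, pow_add]
    ring
  have A1' : ((-1:ℝ)^(j+1) * lucR ((m:ℤ) - 2*(((j+1):ℕ):ℤ))) = -((-1:ℝ)^j * lucR ((m:ℤ)-2*j-2)) := by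
    rw [show ((m:ℤ) - 2*(((j+1):ℕ):ℤ)) = (m:ℤ)-2*j-2 by push_cast; ring, pow_add]
    ring
  have A0' : ((-1:ℝ)^j * lucR ((m:ℤ) - 2*((j:ℕ):ℤ))) = ((-1:ℝ)^j * lucR ((m:ℤ)-2*j)) := by
    norm_num
  unfold dd
  rw [A3, A2', A1', A0']
  have hL := lucasR_ne (m+1)
  field_simp
  linear_combination ((-2:ℝ)*(-1:ℝ)^j) * (s1 + s2 + s4 - s5)

lemma I4 (j : ℕ) : dd (j+2) (j+2) = dd (j+2) j + 2 * dd (j+2) (j+1) := by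
  have hkey : ((lucas (j+2+1)):ℝ) = lucR ((j:ℤ)+2) + 2*lucR (j:ℤ) - lucR ((j:ℤ)-2) := by
    have s1 := lucR_rec3 ((j:ℤ)+3) ((j:ℤ)+2) ((j:ℤ)+1) (by ring) (by ring)
    have s2 := lucR_rec3 ((j:ℤ)+1) ((j:ℤ)) ((j:ℤ)-1) (by ring) (by ring)
    have s3 := lucR_rec3 ((j:ℤ)) ((j:ℤ)-1) ((j:ℤ)-2) (by ring) (by ring)
    rw [lucas_lucR, show ((j+2+1:ℕ):ℤ) = (j:ℤ)+3 by push_cast; ring]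
    linear_combination s1 + s2 - s3
  have A2 : ((-1:ℝ)^(j+2) * lucR ((((j+2):ℕ):ℤ) - 2*(((j+2):ℕ):ℤ))) = lucR ((j:ℤ)+2) := by
    rw [show ((((j+2):ℕ):ℤ) - 2*(((j+2):ℕ):ℤ)) = -((j:ℤ)+2) by push_cast; ring, lucR_neg,
        ← zpow_natCast (-1:ℝ) (j+2), ← mul_assoc, ← zpow_add₀ neg_one_ne,
        show (((j+2:ℕ)):ℤ) + ((j:ℤ)+2) = 2*((j:ℤ)+2) by push_cast; ring,
        neg_one_zpow_even, one_mul]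
  have A1 : ((-1:ℝ)^(j+1) * lucR ((((j+2):ℕ):ℤ) - 2*(((j+1):ℕ):ℤ))) = -lucR (j:ℤ) := by
    rw [show ((((j+2):ℕ):ℤ) - 2*(((j+1):ℕ):ℤ)) = -(j:ℤ) by push_cast; ring, lucR_neg,
        ← zpow_natCast (-1:ℝ) (j+1), ← mul_assoc, ← zpow_add₀ neg_one_ne,
        show (((j+1:ℕ)):ℤ) + ((j:ℤ)) = 2*(j:ℤ)+1 by push_cast; ring,
        neg_one_zpow_odd, neg_one_mul]
  have A0 : ((-1:ℝ)^j * lucR ((((j+2):ℕ):ℤ) - 2*((j:ℕ):ℤ))) = lucR ((j:ℤ)-2) := by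
    rw [show ((((j+2):ℕ):ℤ) - 2*((j:ℕ):ℤ)) = -((j:ℤ)-2) by push_cast; ring, lucR_neg,
        ← zpow_natCast (-1:ℝ) j, ← mul_assoc, ← zpow_add₀ neg_one_ne,
        show ((j:ℕ):ℤ) + ((j:ℤ)-2) = 2*((j:ℤ)-1) by push_cast; ring,
        neg_one_zpow_even, one_mul]
  unfold dd
  rw [A2, A1, A0]
  have hL := lucasR_ne (j+2+1)
  field_simp
  linear_combination (-2:ℝ) * hkey

lemma I5 (j : ℕ) : dd (j+1) j + 2 * dd (j+1) (j+1) = 1 := by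
  have hkey : ((lucas (j+1+1)):ℝ) = 2*lucR ((j:ℤ)+1) - lucR ((j:ℤ)-1) := by
    have s1 := lucR_rec3 ((j:ℤ)+2) ((j:ℤ)+1) ((j:ℤ)) (by ring) (by ring)
    have s2 := lucR_rec3 ((j:ℤ)+1) ((j:ℤ)) ((j:ℤ)-1) (by ring) (by ring)
    rw [lucas_lucR, show ((j+1+1:ℕ):ℤ) = (j:ℤ)+2 by push_cast; ring]
    linear_combination s1 - s2
  have A0 : ((-1:ℝ)^j * lucR ((((j+1):ℕ):ℤ) - 2*((j:ℕ):ℤ))) = -lucR ((j:ℤ)-1) := by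
    rw [show ((((j+1):ℕ):ℤ) - 2*((j:ℕ):ℤ)) = -((j:ℤ)-1) by push_cast; ring, lucR_neg,
        ← zpow_natCast (-1:ℝ) j, ← mul_assoc, ← zpow_add₀ neg_one_ne,
        show ((j:ℕ):ℤ) + ((j:ℤ)-1) = 2*((j:ℤ)-1)+1 by push_cast; ring,
        neg_one_zpow_odd, neg_one_mul]
  have A1 : ((-1:ℝ)^(j+1) * lucR ((((j+1):ℕ):ℤ) - 2*(((j+1):ℕ):ℤ))) = lucR ((j:ℤ)+1) := by
    rw [show ((((j+1):ℕ):ℤ) - 2*(((j+1):ℕ):ℤ)) = -((j:ℤ)+1) by push_cast; ring, lucR_neg,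
        ← zpow_natCast (-1:ℝ) (j+1), ← mul_assoc, ← zpow_add₀ neg_one_ne,
        show (((j+1:ℕ)):ℤ) + ((j:ℤ)+1) = 2*((j:ℤ)+1) by push_cast; ring,
        neg_one_zpow_even, one_mul]
  unfold dd
  rw [A0, A1]
  have hL := lucasR_ne (j+1+1)
  field_simp
  linear_combination (-2:ℝ) * hkey

noncomputable def VV (m k : ℕ) : ℝ := ∑ j ∈ Finset.Ico k (m+1), dd m j

lemma VV_step (m k : ℕ) (hk : k ≤ m) : VV m k = dd m k + VV m (k+1) := by
  unfold VV
  rw [Finset.sum_eq_sum_Ico_succ_bot (by omega)]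

lemma VV_top (m k : ℕ) (hk : m + 1 ≤ k) : VV m k = 0 := by
  unfold VV
  rw [Finset.Ico_eq_empty (by omega), Finset.sum_empty]

lemma key_sum (m : ℕ) :
    ∑ k ∈ Finset.range (m+1), ((-1:ℝ)^k * lucR ((m:ℤ) - 2*(k:ℤ)))
      = 2 * (Nat.fib (m+1) : ℝ) := by
  have hterm : ∀ k : ℕ, ((-1:ℝ)^k * lucR ((m:ℤ) - 2*(k:ℤ)))
      = (fun k : ℕ => (-1:ℝ)^(k+1) * fibR ((m:ℤ) - 2*(k:ℤ) + 1)) (k+1)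
        - (fun k : ℕ => (-1:ℝ)^(k+1) * fibR ((m:ℤ) - 2*(k:ℤ) + 1)) k := by
    intro k
    simp only
    have e1 : ((m:ℤ) - 2*((k+1:ℕ):ℤ) + 1) = (m:ℤ) - 2*(k:ℤ) - 1 := by push_cast; ring
    rw [e1, ← bridge ((m:ℤ) - 2*(k:ℤ)), pow_add, pow_add]
    ring
  rw [Finset.sum_congr rfl (fun k _ => hterm k),
      Finset.sum_range_sub (fun k : ℕ => (-1:ℝ)^(k+1) * fibR ((m:ℤ) - 2*(k:ℤ) + 1)) (m+1)]
  show (-1:ℝ)^(m+1+1) * fibR ((m:ℤ) - 2*((m+1:ℕ):ℤ) + 1)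
      - (-1:ℝ)^(0+1) * fibR ((m:ℤ) - 2*((0:ℕ):ℤ) + 1) = 2 * (Nat.fib (m+1) : ℝ)
  have e2 : ((m:ℤ) - 2*((m+1:ℕ):ℤ) + 1) = -((m:ℤ)+1) := by push_cast; ring
  have e3 : ((m:ℤ) - 2*((0:ℕ):ℤ) + 1) = (m:ℤ)+1 := by push_cast; ring
  rw [e2, e3, fibR_neg ((m:ℤ)+1)]
  have e4 : fibR ((m:ℤ)+1) = (Nat.fib (m+1) : ℝ) := by
    rw [show (m:ℤ)+1 = ((m+1:ℕ):ℤ) by push_cast; ring, fibR_coe]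
  rw [e4, ← zpow_natCast (-1:ℝ) (m+1+1), show ((m+1+1:ℕ):ℤ) = (m:ℤ)+2 by push_cast; ring]
  have e5 : (-1:ℝ)^((m:ℤ)+2) * ((-1:ℝ)^((m:ℤ)+1)) = -1 := by
    rw [← zpow_add₀ neg_one_ne, show ((m:ℤ)+2) + ((m:ℤ)+1) = 2*((m:ℤ)+1)+1 by ring,
        neg_one_zpow_odd]
  linear_combination (-(Nat.fib (m+1):ℝ)) * e5

lemma total_sum (m : ℕ) : ∑ k ∈ Finset.range (m+1), dd m k
    = ((m:ℝ)+1)/5 + 4*(Nat.fib (m+1):ℝ)/(5*(lucas (m+1):ℝ)) := by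
  unfold dd
  rw [← Finset.sum_div, Finset.sum_add_distrib, Finset.sum_const, Finset.card_range,
      ← Finset.mul_sum, key_sum]
  have hL := lucasR_ne (m+1)
  field_simp
  ring

lemma lucas_fib_nat : ∀ p, lucas p + Nat.fib p = 2 * Nat.fib (p+1) := by
  apply two_step
  · simp [lucas]
  · simp [lucas]
  · intro k h1 h2
    have e1 : lucas (k+2) = lucas (k+1) + lucas k := rfl
    have e2 : Nat.fib (k+2) = Nat.fib k + Nat.fib (k+1) := Nat.fib_add_two
    have e3 : Nat.fib (k+3) = Nat.fib (k+1) + Nat.fib (k+2) := Nat.fib_add_two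
    have n1 : Nat.fib (k+1+1) = Nat.fib (k+2) := rfl
    have n2 : Nat.fib (k+2+1) = Nat.fib (k+3) := rfl
    omega

lemma lucas_fibR (p : ℕ) : (lucas p : ℝ) = 2*(Nat.fib (p+1):ℝ) - (Nat.fib p : ℝ) := by
  have h : ((lucas p + Nat.fib p : ℕ) : ℝ) = ((2 * Nat.fib (p+1) : ℕ) : ℝ) :=
    Nat.cast_inj.mpr (lucas_fib_nat p)
  push_cast at h
  linarith

lemma value : ∀ j : ℕ,
    2*(Nat.fib (j+1+1):ℝ)^2/((lucas (j+1+1):ℝ)*(lucas (j+1):ℝ))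
      + ∑ i ∈ Finset.Icc 1 (j+1-1),
          (Nat.fib i:ℝ)*(Nat.fib (i+1):ℝ)/((lucas i:ℝ)*(lucas (i+1):ℝ))
    = ((j+1:ℝ)+1)/5 + 4*(Nat.fib (j+1+1):ℝ)/(5*(lucas (j+1+1):ℝ)) := by
  intro j
  induction j with
  | zero =>
    have he : Finset.Icc 1 (0+1-1) = (∅ : Finset ℕ) := rfl
    rw [he, Finset.sum_empty, show lucas (0+1+1) = 3 from rfl, show lucas (0+1) = 1 from rfl,
        show Nat.fib (0+1+1) = 1 from rfl]
    norm_num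
  | succ j ih =>
    rw [show j+1+1-1 = j+1 by omega] at *
    rw [show j+1-1 = j by omega] at ih
    rw [Finset.sum_Icc_succ_top (by omega : 1 ≤ j + 1)]
    have hS : ∑ i ∈ Finset.Icc 1 j,
          (Nat.fib i:ℝ)*(Nat.fib (i+1):ℝ)/((lucas i:ℝ)*(lucas (i+1):ℝ))
        = ((j+1:ℝ)+1)/5 + 4*(Nat.fib (j+2):ℝ)/(5*(lucas (j+2):ℝ))
          - 2*(Nat.fib (j+2):ℝ)^2/((lucas (j+2):ℝ)*(lucas (j+1):ℝ)) := by
      linarith [ih]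
    rw [hS]
    -- now pure fib/lucas algebra at indices j+1..j+4
    have hf3 : (Nat.fib (j+3):ℝ) = (Nat.fib (j+2):ℝ) + (Nat.fib (j+1):ℝ) := by
      have : Nat.fib (j+3) = Nat.fib (j+1) + Nat.fib (j+2) := Nat.fib_add_two
      rw [this]; push_cast; ring
    have hf4 : (Nat.fib (j+4):ℝ) = (Nat.fib (j+3):ℝ) + (Nat.fib (j+2):ℝ) := by
      have : Nat.fib (j+4) = Nat.fib (j+2) + Nat.fib (j+3) := Nat.fib_add_two
      rw [this]; push_cast; ring
    set a := (Nat.fib (j+1) : ℝ) with ha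
    set b := (Nat.fib (j+2) : ℝ) with hb
    have hl1 : (lucas (j+1):ℝ) = 2*b - a := by rw [lucas_fibR]
    have hl2 : (lucas (j+2):ℝ) = 2*a + b := by
      rw [lucas_fibR, show j+2+1 = j+3 by ring, hf3]; ring
    have hl3 : (lucas (j+3):ℝ) = a + 3*b := by
      rw [lucas_fibR, show j+3+1 = j+4 by ring, hf4, hf3]; ring
    have p1 : (0:ℝ) < 2*b - a := by rw [← hl1]; exact lucasR_pos _
    have p2 : (0:ℝ) < 2*a + b := by rw [← hl2]; exact lucasR_pos _
    have p3 : (0:ℝ) < a + 3*b := by rw [← hl3]; exact lucasR_pos _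
    rw [show j+1+1+1 = j+3 by ring, show j+1+1 = j+2 by ring, hf3, hl1, hl2, hl3]
    have q1 := ne_of_gt p1
    have q2 := ne_of_gt p2
    have q3 : a + b * 3 ≠ 0 := by linarith
    field_simp
    push_cast
    ring
open scoped Classical

lemma lap_mulVec {n : ℕ} (G : SimpleGraph (Fin n)) (v : Fin n → ℝ) (a : Fin n) :
    (lap G).mulVec v a = ∑ c : Fin n, (if G.Adj a c then v a - v c else 0) := by
  unfold lap Matrix.mulVec dotProduct
  simp only [Matrix.of_apply]
  have expand : ∀ c : Fin n,
      (if a = c then (∑ c' : Fin n, (if G.Adj a c' then (1:ℝ) else 0)) else if G.Adj a c then -1 else 0) * v c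
      = (if a = c then (∑ c' : Fin n, (if G.Adj a c' then (1:ℝ) else 0)) * v a else 0)
        + (if G.Adj a c then -(v c) else 0) := by
    intro c
    by_cases h : a = c
    · subst h
      rw [if_pos rfl, if_pos rfl, if_neg (G.loopless.irrefl a)]
      ring
    · rw [if_neg h, if_neg h, zero_add]
      by_cases h2 : G.Adj a c
      · rw [if_pos h2, if_pos h2]; ring
      · rw [if_neg h2, if_neg h2]; ring
  rw [Finset.sum_congr rfl (fun c _ => expand c), Finset.sum_add_distrib,
      Finset.sum_ite_eq Finset.univ a
        (fun _ => (∑ c' : Fin n, (if G.Adj a c' then (1:ℝ) else 0)) * v a),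
      if_pos (Finset.mem_univ a), Finset.sum_mul]
  have e1 : ∀ c' : Fin n, (if G.Adj a c' then (1:ℝ) else 0) * v a = (if G.Adj a c' then v a else 0) := by
    intro c'; split_ifs <;> ring
  rw [Finset.sum_congr rfl (fun c _ => e1 c)]
  have e2 : ∀ c : Fin n, (if G.Adj a c then v a - v c else 0)
      = (if G.Adj a c then v a else 0) + (if G.Adj a c then -(v c) else 0) := by
    intro c; split_ifs <;> ring
  rw [Finset.sum_congr rfl (fun c _ => e2 c), Finset.sum_add_distrib]

lemma sum_point {n : ℕ} (x : ℕ) (W : ℝ) :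
    ∑ c : Fin n, (if (c:ℕ) = x then W else 0) = if x < n then W else 0 := by
  rw [Fin.sum_univ_eq_sum_range (fun j => if j = x then W else 0) n,
      Finset.sum_ite_eq' (Finset.range n) x (fun _ => W)]
  simp [Finset.mem_range]

lemma row_formula (n : ℕ) (V : ℕ → ℝ) (a : Fin n) :
    ∑ c : Fin n, (if (linear2Tree n).Adj a c then V (a:ℕ) - V (c:ℕ) else 0)
      = (if 2 ≤ (a:ℕ) then V (a:ℕ) - V ((a:ℕ) - 2) else 0)
        + (if 1 ≤ (a:ℕ) then V (a:ℕ) - V ((a:ℕ) - 1) else 0)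
        + (if (a:ℕ) + 1 < n then V (a:ℕ) - V ((a:ℕ) + 1) else 0)
        + (if (a:ℕ) + 2 < n then V (a:ℕ) - V ((a:ℕ) + 2) else 0) := by
  have ha : (a:ℕ) < n := a.isLt
  have key : ∀ c : Fin n,
      (if (linear2Tree n).Adj a c then V (a:ℕ) - V (c:ℕ) else 0)
      = (if (c:ℕ) = (a:ℕ) - 2 then (if 2 ≤ (a:ℕ) then V (a:ℕ) - V ((a:ℕ)-2) else 0) else 0)
        + (if (c:ℕ) = (a:ℕ) - 1 then (if 1 ≤ (a:ℕ) then V (a:ℕ) - V ((a:ℕ)-1) else 0) else 0)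
        + (if (c:ℕ) = (a:ℕ) + 1 then V (a:ℕ) - V ((a:ℕ)+1) else 0)
        + (if (c:ℕ) = (a:ℕ) + 2 then V (a:ℕ) - V ((a:ℕ)+2) else 0) := by
    intro c
    have hc : (c:ℕ) < n := c.isLt
    by_cases h : (linear2Tree n).Adj a c
    · rw [if_pos h]
      obtain ⟨hne, h1, h2⟩ := (h : a ≠ c ∧ (a:ℕ) ≤ (c:ℕ)+2 ∧ (c:ℕ) ≤ (a:ℕ)+2)
      have hne' : (a:ℕ) ≠ (c:ℕ) := fun e => hne (Fin.ext e)
      rcases (by omega : ((c:ℕ) = (a:ℕ) - 2 ∧ 2 ≤ (a:ℕ)) ∨ ((c:ℕ) = (a:ℕ) - 1 ∧ 1 ≤ (a:ℕ))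
          ∨ (c:ℕ) = (a:ℕ) + 1 ∨ (c:ℕ) = (a:ℕ) + 2) with (⟨e,hg⟩|⟨e,hg⟩|e|e)
      · have t1 : (if (c:ℕ) = (a:ℕ) - 2 then (if 2 ≤ (a:ℕ) then V (a:ℕ) - V ((a:ℕ)-2) else 0) else 0)
            = V (a:ℕ) - V (c:ℕ) := by rw [if_pos e, if_pos hg, e]
        rw [t1, if_neg (by omega), if_neg (by omega), if_neg (by omega)]; ring
      · have t2 : (if (c:ℕ) = (a:ℕ) - 1 then (if 1 ≤ (a:ℕ) then V (a:ℕ) - V ((a:ℕ)-1) else 0) else 0)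
            = V (a:ℕ) - V (c:ℕ) := by rw [if_pos e, if_pos hg, e]
        have t1 : (if (c:ℕ) = (a:ℕ) - 2 then (if 2 ≤ (a:ℕ) then V (a:ℕ) - V ((a:ℕ)-2) else 0) else 0)
            = 0 := by split_ifs <;> first | rfl | (exfalso; omega)
        rw [t1, t2, if_neg (by omega), if_neg (by omega)]; ring
      · rw [if_neg (by omega), if_neg (by omega), if_pos e, if_neg (by omega), e]; ring
      · rw [if_neg (by omega), if_neg (by omega), if_neg (by omega), if_pos e, e]; ring
    · rw [if_neg h]
      have hfar : (a:ℕ) = (c:ℕ) ∨ (a:ℕ) + 2 < (c:ℕ) ∨ (c:ℕ) + 2 < (a:ℕ) := by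
        by_contra hcon
        push_neg at hcon
        obtain ⟨w1, w2, w3⟩ := hcon
        exact h ⟨fun e => w1 (congrArg Fin.val e), by omega, by omega⟩
      have t1 : (if (c:ℕ) = (a:ℕ) - 2 then (if 2 ≤ (a:ℕ) then V (a:ℕ) - V ((a:ℕ)-2) else 0) else 0)
          = 0 := by split_ifs <;> first | rfl | (exfalso; omega)
      have t2 : (if (c:ℕ) = (a:ℕ) - 1 then (if 1 ≤ (a:ℕ) then V (a:ℕ) - V ((a:ℕ)-1) else 0) else 0)
          = 0 := by split_ifs <;> first | rfl | (exfalso; omega)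
      have t3 : (if (c:ℕ) = (a:ℕ) + 1 then V (a:ℕ) - V ((a:ℕ)+1) else 0) = 0 := by
        split_ifs <;> first | rfl | (exfalso; omega)
      have t4 : (if (c:ℕ) = (a:ℕ) + 2 then V (a:ℕ) - V ((a:ℕ)+2) else 0) = 0 := by
        split_ifs <;> first | rfl | (exfalso; omega)
      rw [t1, t2, t3, t4]; ring
  rw [Finset.sum_congr rfl (fun c _ => key c), Finset.sum_add_distrib, Finset.sum_add_distrib,
      Finset.sum_add_distrib, sum_point, sum_point, sum_point, sum_point,
      if_pos (show (a:ℕ)-2 < n by omega), if_pos (show (a:ℕ)-1 < n by omega)]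

lemma lap_ker_adj {n : ℕ} (G : SimpleGraph (Fin n)) (u : Fin n → ℝ)
    (h : (lap G).mulVec u = 0) : ∀ a c, G.Adj a c → u a = u c := by
  have hrow : ∀ a, ∑ c : Fin n, (if G.Adj a c then u a - u c else 0) = 0 := by
    intro a; rw [← lap_mulVec, h]; rfl
  have hquad : ∑ a : Fin n, ∑ c : Fin n, (if G.Adj a c then (u a - u c)^2 else 0) = 0 := by
    have e1 : ∀ a c : Fin n, (if G.Adj a c then (u a - u c)^2 else 0)
        = u a * (if G.Adj a c then u a - u c else 0)
          - u c * (if G.Adj a c then u a - u c else 0) := by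
      intro a c; split_ifs <;> ring
    have e2 : ∀ c a : Fin n, (if G.Adj a c then u a - u c else 0)
        = -(if G.Adj c a then u c - u a else 0) := by
      intro c a
      by_cases h2 : G.Adj a c
      · rw [if_pos h2, if_pos h2.symm]; ring
      · rw [if_neg h2, if_neg (fun hh => h2 hh.symm)]; ring
    calc ∑ a : Fin n, ∑ c : Fin n, (if G.Adj a c then (u a - u c)^2 else 0)
        = ∑ a : Fin n, (∑ c : Fin n, u a * (if G.Adj a c then u a - u c else 0)
            - ∑ c : Fin n, u c * (if G.Adj a c then u a - u c else 0)) := by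
          refine Finset.sum_congr rfl (fun a _ => ?_)
          rw [← Finset.sum_sub_distrib]
          exact Finset.sum_congr rfl (fun c _ => e1 a c)
      _ = ∑ a : Fin n, (0 - ∑ c : Fin n, u c * (if G.Adj a c then u a - u c else 0)) := by
          refine Finset.sum_congr rfl (fun a _ => ?_)
          rw [← Finset.mul_sum, hrow a, mul_zero]
      _ = - ∑ a : Fin n, ∑ c : Fin n, u c * (if G.Adj a c then u a - u c else 0) := by
          rw [← Finset.sum_neg_distrib]
          exact Finset.sum_congr rfl (fun a _ => by ring)
      _ = - ∑ c : Fin n, ∑ a : Fin n, u c * (if G.Adj a c then u a - u c else 0) := by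
          rw [Finset.sum_comm]
      _ = 0 := by
          rw [neg_eq_zero]
          refine Finset.sum_eq_zero (fun c _ => ?_)
          have : ∑ a : Fin n, u c * (if G.Adj a c then u a - u c else 0)
              = u c * -(∑ a : Fin n, (if G.Adj c a then u c - u a else 0)) := by
            rw [← Finset.mul_sum]
            congr 1
            rw [← Finset.sum_neg_distrib]
            exact Finset.sum_congr rfl (fun a _ => by rw [e2 c a])
          rw [this, hrow c]
          ring
  intro a c hac
  have term_nonneg : ∀ (a c : Fin n), (0:ℝ) ≤ (if G.Adj a c then (u a - u c)^2 else 0) := by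
    intro a c
    split_ifs
    · positivity
    · exact le_rfl
  have inner_nonneg : ∀ (a : Fin n), (0:ℝ) ≤ ∑ c : Fin n, (if G.Adj a c then (u a - u c)^2 else 0) :=
    fun a => Finset.sum_nonneg (fun c _ => term_nonneg a c)
  have h1 := (Finset.sum_eq_zero_iff_of_nonneg (fun x _ => inner_nonneg x)).1 hquad a (Finset.mem_univ a)
  have h2 := (Finset.sum_eq_zero_iff_of_nonneg (fun x _ => term_nonneg a x)).1 h1 c (Finset.mem_univ c)
  rw [if_pos hac] at h2
  have := pow_eq_zero_iff (n := 2) (by norm_num) |>.1 h2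
  linarith [this]

lemma linear2Tree_const {n : ℕ} (u : Fin n → ℝ)
    (hadj : ∀ a c, (linear2Tree n).Adj a c → u a = u c) :
    ∀ i j : Fin n, u i = u j := by
  have step : ∀ k (h : k + 1 < n), u ⟨k, by omega⟩ = u ⟨k+1, h⟩ := by
    intro k h
    refine hadj _ _ ⟨?_, ?_, ?_⟩
    · intro e
      have he : k = k + 1 := congrArg Fin.val e
      omega
    · show k ≤ (k+1) + 2
      omega
    · show (k+1) ≤ k + 2
      omega
  intro i j
  have hn : 0 < n := i.pos
  have base : ∀ k (hk : k < n), u ⟨k, hk⟩ = u ⟨0, hn⟩ := by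
    intro k
    induction k with
    | zero => intro hk; rfl
    | succ p ih =>
      intro hk
      have hp : p < n := by omega
      rw [← step p hk]
      exact ih hp
  have hi : u i = u ⟨0, hn⟩ := by
    have := base i.val i.isLt
    simpa using this
  have hj : u j = u ⟨0, hn⟩ := by
    have := base j.val j.isLt
    simpa using this
  rw [hi, hj]

lemma fin_eq_mk_iff {n : ℕ} (a : Fin n) (x : ℕ) (hx : x < n) : (a = ⟨x, hx⟩) ↔ (a:ℕ) = x := by
  constructor
  · intro e; rw [e]
  · intro e; exact Fin.ext e

lemma hv0_lemma (n m : ℕ) (hnm : n = m + 2) (hm1 : 1 ≤ m) (h0 : 0 < n) (h1 : n - 1 < n) :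
    (lap (linear2Tree n)).mulVec (fun c : Fin n => VV m (c:ℕ)) = esrc ⟨0, h0⟩ ⟨n-1, h1⟩ := by
  funext a
  have ha : (a:ℕ) < n := a.isLt
  rw [lap_mulVec]
  show (∑ c : Fin n, if (linear2Tree n).Adj a c then VV m (a:ℕ) - VV m (c:ℕ) else 0)
      = esrc ⟨0, h0⟩ ⟨n-1, h1⟩ a
  rw [row_formula n (VV m) a]
  simp only [esrc]
  rcases (by omega : (a:ℕ) = 0 ∨ (a:ℕ) = m + 1 ∨ (1 ≤ (a:ℕ) ∧ (a:ℕ) ≤ m)) with h0v | htop | ⟨hge, hle⟩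
  · rw [h0v, if_neg (by omega : ¬ (2:ℕ) ≤ 0), if_neg (by omega : ¬ (1:ℕ) ≤ 0),
        if_pos (by omega : (0:ℕ) + 1 < n), if_pos (by omega : (0:ℕ) + 2 < n),
        if_pos ((fin_eq_mk_iff a 0 h0).2 h0v),
        if_neg (show ¬ (a = ⟨n-1, h1⟩) from fun e => by have := (fin_eq_mk_iff a (n-1) h1).1 e; omega)]
    have s0 : VV m 0 = dd m 0 + VV m 1 := VV_step m 0 (by omega)
    have s1 : VV m 1 = dd m 1 + VV m 2 := VV_step m 1 hm1
    have i0' := I0 m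
    norm_num
    linarith
  · rw [htop, if_pos (by omega : 2 ≤ m + 1), if_pos (by omega : 1 ≤ m + 1),
        if_neg (by omega : ¬ (m + 1 + 1 < n)), if_neg (by omega : ¬ (m + 1 + 2 < n)),
        if_neg (show ¬ (a = ⟨0, h0⟩) from fun e => by have := (fin_eq_mk_iff a 0 h0).1 e; omega),
        if_pos ((fin_eq_mk_iff a (n-1) h1).2 (by omega))]
    obtain ⟨p, hp⟩ : ∃ p, m = p + 1 := ⟨m - 1, by omega⟩
    rw [show m + 1 - 2 = p by omega, show m + 1 - 1 = m by omega]
    have st1 : VV m p = dd m p + VV m (p+1) := VV_step m p (by omega)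
    rw [← hp] at st1
    have st2 : VV m m = dd m m + VV m (m+1) := VV_step m m le_rfl
    have top : VV m (m+1) = 0 := VV_top m (m+1) le_rfl
    have i5 := I5 p
    rw [← hp] at i5
    linarith
  · rw [if_neg (show ¬ (a = ⟨0, h0⟩) from fun e => by have := (fin_eq_mk_iff a 0 h0).1 e; omega),
        if_neg (show ¬ (a = ⟨n-1, h1⟩) from fun e => by have := (fin_eq_mk_iff a (n-1) h1).1 e; omega)]
    rcases (by omega : ((a:ℕ) = 1 ∧ m = 1) ∨ ((a:ℕ) = 1 ∧ 2 ≤ m)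
        ∨ (2 ≤ (a:ℕ) ∧ (a:ℕ) + 1 ≤ m) ∨ (2 ≤ (a:ℕ) ∧ (a:ℕ) = m)) with ⟨hq, hm⟩ | ⟨hq, hm⟩ | ⟨hq, hm⟩ | ⟨hq, hm⟩
    · rw [hq, hm, if_neg (by omega : ¬ (2:ℕ) ≤ 1), if_pos (le_rfl : (1:ℕ) ≤ 1),
          if_pos (by omega : (1:ℕ) + 1 < n), if_neg (by omega : ¬ ((1:ℕ) + 2 < n))]
      have s0 : VV 1 0 = dd 1 0 + VV 1 1 := VV_step 1 0 (by omega)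
      have s1 : VV 1 1 = dd 1 1 + VV 1 2 := VV_step 1 1 le_rfl
      have ib := I1b
      norm_num
      linarith
    · rw [hq, if_neg (by omega : ¬ (2:ℕ) ≤ 1), if_pos (le_rfl : (1:ℕ) ≤ 1),
          if_pos (by omega : (1:ℕ) + 1 < n), if_pos (by omega : (1:ℕ) + 2 < n)]
      have s0 : VV m 0 = dd m 0 + VV m 1 := VV_step m 0 (by omega)
      have s1 : VV m 1 = dd m 1 + VV m 2 := VV_step m 1 (by omega)
      have s2 : VV m 2 = dd m 2 + VV m 3 := VV_step m 2 (by omega)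
      have ia := I1a m
      norm_num
      linarith
    · obtain ⟨p, hp⟩ : ∃ p, (a:ℕ) = p + 2 := ⟨(a:ℕ) - 2, by omega⟩
      rw [hp, if_pos (by omega : 2 ≤ p + 2), if_pos (by omega : 1 ≤ p + 2),
          if_pos (by omega : p + 2 + 1 < n), if_pos (by omega : p + 2 + 2 < n),
          show p + 2 - 2 = p by omega, show p + 2 - 1 = p + 1 by omega,
          show p + 2 + 1 = p + 3 by omega, show p + 2 + 2 = p + 4 by omega]
      have s0 : VV m p = dd m p + VV m (p+1) := VV_step m p (by omega)
      have s1 : VV m (p+1) = dd m (p+1) + VV m (p+2) := VV_step m (p+1) (by omega)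
      have s2 : VV m (p+2) = dd m (p+2) + VV m (p+3) := VV_step m (p+2) (by omega)
      have s3 : VV m (p+3) = dd m (p+3) + VV m (p+4) := by
        have h := VV_step m (p+3) (by omega)
        rw [show p + 3 + 1 = p + 4 by omega] at h
        exact h
      have i2 := I2 m p
      linarith
    · obtain ⟨p, hp⟩ : ∃ p, m = p + 2 := ⟨m - 2, by omega⟩
      rw [hm, hp, if_pos (by omega : 2 ≤ p + 2), if_pos (by omega : 1 ≤ p + 2),
          if_pos (by omega : p + 2 + 1 < n), if_neg (by omega : ¬ (p + 2 + 2 < n)),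
          show p + 2 - 2 = p by omega, show p + 2 - 1 = p + 1 by omega,
          show p + 2 + 1 = p + 3 by omega]
      have s0 : VV (p+2) p = dd (p+2) p + VV (p+2) (p+1) := VV_step (p+2) p (by omega)
      have s1 : VV (p+2) (p+1) = dd (p+2) (p+1) + VV (p+2) (p+2) := VV_step (p+2) (p+1) (by omega)
      have s2 : VV (p+2) (p+2) = dd (p+2) (p+2) + VV (p+2) (p+3) := by
        have h := VV_step (p+2) (p+2) le_rfl
        rw [show p + 2 + 1 = p + 3 by omega] at h
        exact h
      have top : VV (p+2) (p+3) = 0 := VV_top (p+2) (p+3) (by omega)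
      have i4 := I4 p
      linarith


/-- For the straight linear 2-tree on `n ≥ 3` vertices with `m = n - 2`,
the resistance distance between the extreme vertices `1` and `n` equals
`2 F_{m+1}² / (L_{m+1} L_m) + Σ_{i=1}^{m-1} F_i F_{i+1} / (L_i L_{i+1})`. -/
theorem stmt2 (n : ℕ) (hn : 3 ≤ n) (m : ℕ) (hm : m = n - 2) :
    IsResistance (linear2Tree n) ⟨0, by omega⟩ ⟨n - 1, by omega⟩
      (2 * (Nat.fib (m + 1) : ℝ) ^ 2 / ((lucas (m + 1) : ℝ) * (lucas m : ℝ))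
        + ∑ i ∈ Finset.Icc 1 (m - 1),
            (Nat.fib i : ℝ) * (Nat.fib (i + 1) : ℝ) / ((lucas i : ℝ) * (lucas (i + 1) : ℝ))) := by

  have hnm : n = m + 2 := by omega
  have hm1 : 1 ≤ m := by omega
  obtain ⟨j, hj⟩ : ∃ j, m = j + 1 := ⟨m - 1, by omega⟩
  have h0 : 0 < n := by omega
  have h1 : n - 1 < n := by omega
  have hv0 := hv0_lemma n m hnm hm1 h0 h1
  have hVtop : VV m (n-1) = 0 := VV_top m (n-1) (by omega)
  have hV0 : VV m 0 = ∑ k ∈ Finset.range (m+1), dd m k := by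
    unfold VV; rw [Finset.range_eq_Ico]
  have hE : 2 * (Nat.fib (m + 1) : ℝ) ^ 2 / ((lucas (m + 1) : ℝ) * (lucas m : ℝ))
        + ∑ i ∈ Finset.Icc 1 (m - 1),
            (Nat.fib i : ℝ) * (Nat.fib (i + 1) : ℝ) / ((lucas i : ℝ) * (lucas (i + 1) : ℝ))
      = VV m 0 - VV m (n-1) := by
    rw [hVtop, sub_zero, hV0, total_sum m, hj]
    rw [value j]
    push_cast
    ring
  constructor
  · exact ⟨_, hv0⟩
  · intro v hv
    have hker : (lap (linear2Tree n)).mulVec (v - fun c : Fin n => VV m (c:ℕ)) = 0 := by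
      rw [Matrix.mulVec_sub, hv, hv0]
      simp
    have hadj := lap_ker_adj _ _ hker
    have hconst := linear2Tree_const _ hadj ⟨0, h0⟩ ⟨n-1, h1⟩
    have hc2 : v ⟨0, h0⟩ - VV m 0 = v ⟨n-1, h1⟩ - VV m (n-1) := hconst
    rw [hE]
    show VV m 0 - VV m (n - 1) = v ⟨0, h0⟩ - v ⟨n-1, h1⟩
    linarith
end

section
/- For each n ≥ 3 let G_n be the straight linear 2-tree on n vertices. Then the sequence of differences r_{G_{n+1}}(1, n+1) − r_{G_n}(1, n) converges to 1/5 as n → ∞. -/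
noncomputable def phi : ℝ := (1 + Real.sqrt 5)/2
noncomputable def psi : ℝ := (1 - Real.sqrt 5)/2

lemma sqrt5_gt : (2:ℝ) < Real.sqrt 5 := by
  nlinarith [sqrt5_sq, sqrt5_pos]
lemma sqrt5_lt : Real.sqrt 5 < 3 := by nlinarith [sqrt5_sq, sqrt5_pos]
lemma phi_pos : 0 < phi := by unfold phi; linarith [sqrt5_pos]
lemma phi_gt : (3/2:ℝ) < phi := by unfold phi; linarith [sqrt5_gt]
lemma psi_neg : psi < 0 := by unfold psi; linarith [sqrt5_gt]
lemma psi_gt : (-1:ℝ) < psi := by unfold psi; linarith [sqrt5_lt]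
lemma phi_ne : phi ≠ 0 := ne_of_gt phi_pos
lemma psi_ne : psi ≠ 0 := ne_of_lt psi_neg
lemma phi_mul_psi_s4 : phi * psi = -1 := by
  unfold phi psi; nlinarith [sqrt5_sq]
lemma phi_add_psi : phi + psi = 1 := by unfold phi psi; ring
lemma phi_sub_psi : phi - psi = Real.sqrt 5 := by unfold phi psi; ring
lemma phi_sq : phi * phi = phi + 1 := by unfold phi; nlinarith [sqrt5_sq]
lemma psi_sq : psi * psi = psi + 1 := by unfold psi; nlinarith [sqrt5_sq]

noncomputable def ff (t : ℤ) : ℝ := (phi^t - psi^t)/Real.sqrt 5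
noncomputable def ll (t : ℤ) : ℝ := phi^t + psi^t

lemma frec (t : ℤ) : ff (t+2) = ff (t+1) + ff t := by
  unfold ff
  rw [show t+2 = (t+1)+1 by ring, zpow_add_one₀ phi_ne, zpow_add_one₀ psi_ne,
    zpow_add_one₀ phi_ne, zpow_add_one₀ psi_ne]
  have h5 := sqrt5_pos.ne'
  field_simp
  linear_combination (phi^t * phi_sq - psi^t * psi_sq)

-- phi + phi⁻¹ = √5,  psi + psi⁻¹ = -√5
lemma phi_inv : phi⁻¹ = -psi := by
  field_simp [phi_ne]
  linear_combination phi_mul_psi_s4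
lemma psi_inv : psi⁻¹ = -phi := by
  field_simp [psi_ne]
  linear_combination phi_mul_psi_s4

lemma lval (t : ℤ) : ll t = ff (t+1) + ff (t-1) := by
  unfold ff ll
  rw [zpow_add_one₀ phi_ne, zpow_add_one₀ psi_ne, zpow_sub_one₀ phi_ne, zpow_sub_one₀ psi_ne,
    phi_inv, psi_inv]
  have h5 := sqrt5_pos.ne'
  rw [← add_div, eq_div_iff h5]
  linear_combination -(phi^t + psi^t) * phi_sub_psi
lemma fneg (t : ℤ) : ff (-t) = -((-1:ℝ)^t * ff t) := by
  unfold ff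
  rw [zpow_neg, zpow_neg, ← inv_zpow, ← inv_zpow, phi_inv, psi_inv,
    show -psi = (-1)*psi by ring, show -phi = (-1)*phi by ring, mul_zpow, mul_zpow]
  ring
lemma negone_sq (t : ℤ) : (-1:ℝ)^t * (-1:ℝ)^t = 1 := by
  rw [← mul_zpow]; norm_num
lemma negone_add_one (t : ℤ) : (-1:ℝ)^(t+1) = -(-1:ℝ)^t := by
  rw [zpow_add_one₀ (by norm_num : (-1:ℝ) ≠ 0)]; ring
lemma negone_sub_one (t : ℤ) : (-1:ℝ)^(t-1) = -(-1:ℝ)^t := by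
  rw [zpow_sub_one₀ (by norm_num : (-1:ℝ) ≠ 0)]; norm_num
lemma negone_add_two (t : ℤ) : (-1:ℝ)^(t+2) = (-1:ℝ)^t := by
  rw [show t+2 = (t+1)+1 by ring, negone_add_one, negone_add_one]; ring
lemma negone_sub_two (t : ℤ) : (-1:ℝ)^(t-2) = (-1:ℝ)^t := by
  rw [show t-2 = (t-1)-1 by ring, negone_sub_one, negone_sub_one]; ring

lemma ll_pos {t : ℤ} (ht : 0 ≤ t) : 0 < ll t := by
  unfold ll
  obtain ⟨k, rfl⟩ : ∃ k : ℕ, t = (k:ℤ) := ⟨t.toNat, (Int.toNat_of_nonneg ht).symm⟩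
  rw [zpow_natCast, zpow_natCast]
  rcases Nat.eq_zero_or_pos k with hk | hk
  · subst hk; norm_num
  · have h1 : |psi ^ k| ≤ |psi| := by
      rw [abs_pow]
      calc |psi| ^ k ≤ |psi| ^ 1 := by
            apply pow_le_pow_of_le_one (abs_nonneg _) _ hk
            rw [abs_le]; constructor <;> nlinarith [psi_neg, psi_gt]
        _ = |psi| := pow_one _
    have h2 : phi ≤ phi ^ k := by
      calc phi = phi ^ 1 := (pow_one _).symm
        _ ≤ phi ^ k := pow_le_pow_right₀ (by nlinarith [phi_gt]) hk
    have h3 : |psi| < 1 := by rw [abs_lt]; constructor <;> nlinarith [psi_neg, psi_gt]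
    have := abs_le.1 h1
    nlinarith [phi_gt]

lemma r1 (s : ℤ) : ff s = ff (s-1) + ff (s-2) := by
  have := frec (s-2)
  rw [show s-2+2 = s by ring, show s-2+1 = s-1 by ring] at this
  exact this

lemma idA (m : ℤ) : ll m = 2 * ff m + ff (m-2) - ff (m-4) := by
  have h0 := r1 (m-2); have h1 := r1 (m-1); have h2 := r1 m; have h3 := r1 (m+1)
  have h4 := lval m
  ring_nf at h0 h1 h2 h3 h4 ⊢
  linarith

lemma idB (m : ℤ) : ll m = ff m + 3 * ff (m-2) + ff (m-4) - ff (m-6) := by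
  have h0 := r1 (m-4); have h1 := r1 (m-3); have h2 := r1 (m-2); have h3 := r1 (m-1)
  have h4 := r1 m; have h5 := r1 (m+1)
  have h6 := lval m
  ring_nf at h0 h1 h2 h3 h4 h5 h6 ⊢
  linarith

lemma idC (t : ℤ) : 4 * ff t + ff (t+2) + ff (t-2) = ff (t+4) + ff (t-4) := by
  have h0 := r1 (t-2); have h1 := r1 (t-1); have h2 := r1 t; have h3 := r1 (t+1)
  have h4 := r1 (t+2); have h5 := r1 (t+3); have h6 := r1 (t+4)
  ring_nf at h0 h1 h2 h3 h4 h5 h6 ⊢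
  linarith

noncomputable def Wf (m k : ℤ) : ℝ := (m - k) * ll m + 2*(-1:ℝ)^k * ff (m - 2*k) + 2 * ff m

lemma lemWm (m : ℤ) : Wf m m = 0 := by
  unfold Wf
  rw [show m - 2*m = -m by ring, fneg]
  linear_combination (-2 * ff m) * negone_sq m

lemma lemW0 (m : ℤ) : 2 * Wf m 0 - Wf m 1 - Wf m 2 = 5 * ll m := by
  unfold Wf
  norm_num
  linear_combination -2 * idA m

lemma lemW1 (m : ℤ) : 3 * Wf m 1 - Wf m 0 - Wf m 2 - Wf m 3 = 0 := by
  unfold Wf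
  norm_num
  linear_combination 2 * idB m

lemma lemWmid (m a : ℤ) : 4 * Wf m a - Wf m (a-2) - Wf m (a-1) - Wf m (a+1) - Wf m (a+2) = 0 := by
  unfold Wf
  rw [show m - 2*(a-2) = (m-2*a)+4 by ring, show m - 2*(a-1) = (m-2*a)+2 by ring,
    show m - 2*(a+1) = (m-2*a)-2 by ring, show m - 2*(a+2) = (m-2*a)-4 by ring,
    negone_sub_two, negone_add_two, negone_sub_one, negone_add_one]
  push_cast
  linear_combination (2 * (-1:ℝ)^a) * idC (m - 2*a)

lemma lemW2 (m : ℤ) : 3 * Wf m (m-1) - Wf m (m-3) - Wf m (m-2) - Wf m m = 0 := by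
  have e1 : (-1:ℝ)^(m-1) = -(-1:ℝ)^m := negone_sub_one m
  have e2 : (-1:ℝ)^(m-2) = (-1:ℝ)^m := negone_sub_two m
  have e3 : (-1:ℝ)^(m-3) = -(-1:ℝ)^m := by
    rw [show m-3 = (m-1)-2 by ring, negone_sub_two, e1]
  have e4 : (-1:ℝ)^(m-4) = (-1:ℝ)^m := by
    rw [show m-4 = (m-2)-2 by ring, negone_sub_two, e2]
  have e6 : (-1:ℝ)^(m-6) = (-1:ℝ)^m := by
    rw [show m-6 = (m-4)-2 by ring, negone_sub_two, e4]
  unfold Wf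
  rw [show m - 2*(m-1) = -(m-2) by ring, show m - 2*(m-3) = -(m-6) by ring,
    show m - 2*(m-2) = -(m-4) by ring, show m - 2*m = -m by ring,
    fneg (m-2), fneg (m-6), fneg (m-4), fneg m, e1, e2, e3, e4, e6]
  push_cast
  linear_combination (6 * ff (m-2) + 2 * ff m + 2 * ff (m-4) - 2 * ff (m-6)) * negone_sq m - 2 * idB m

lemma lemWlast (m : ℤ) : 2 * Wf m m - Wf m (m-1) - Wf m (m-2) = -(5 * ll m) := by
  have e1 : (-1:ℝ)^(m-1) = -(-1:ℝ)^m := negone_sub_one m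
  have e2 : (-1:ℝ)^(m-2) = (-1:ℝ)^m := negone_sub_two m
  have e4 : (-1:ℝ)^(m-4) = (-1:ℝ)^m := by
    rw [show m-4 = (m-2)-2 by ring, negone_sub_two, e2]
  unfold Wf
  rw [show m - 2*(m-1) = -(m-2) by ring, show m - 2*(m-2) = -(m-4) by ring,
    show m - 2*m = -m by ring,
    fneg (m-2), fneg (m-4), fneg m, e1, e2, e4]
  push_cast
  linear_combination (-4*ff m - 2*ff (m-2) + 2*ff (m-4)) * negone_sq m + 2 * idA m

open scoped Classical

lemma mulVec_lap {n : ℕ} (G : SimpleGraph (Fin n)) (v : Fin n → ℝ) (a : Fin n) :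
    (lap G).mulVec v a = ∑ b : Fin n, (if G.Adj a b then v a - v b else 0) := by
  classical
  unfold lap Matrix.mulVec dotProduct
  simp only [Matrix.of_apply]
  have h1 : ∀ b : Fin n,
      (if a = b then (∑ c : Fin n, if G.Adj a c then (1:ℝ) else 0) else if G.Adj a b then -1 else 0) * v b
      = (if a = b then (∑ c : Fin n, if G.Adj a c then (1:ℝ) else 0) * v a else 0)
        + (if G.Adj a b then -(v b) else 0) := by
    intro b
    by_cases hab : a = b
    · subst hab; simp [G.loopless.irrefl a]
    · simp only [if_neg hab]
      by_cases h : G.Adj a b <;> simp [h]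
  rw [Finset.sum_congr rfl fun b _ => h1 b, Finset.sum_add_distrib]
  rw [Finset.sum_ite_eq]
  simp only [Finset.mem_univ, if_true]
  have h2 : ∀ b : Fin n, (if G.Adj a b then v a - v b else 0)
      = (if G.Adj a b then (1:ℝ) else 0) * v a + (if G.Adj a b then -(v b) else 0) := by
    intro b; by_cases h : G.Adj a b <;> simp [h]; ring
  rw [Finset.sum_congr rfl fun b _ => h2 b, Finset.sum_add_distrib, ← Finset.sum_mul]

lemma sum2 {n p1 p2 : ℕ} (T : ℕ → ℝ) (h12 : p1 < p2) (h2 : p2 < n)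
    (h0 : ∀ j, j < n → j ≠ p1 → j ≠ p2 → T j = 0) :
    ∑ j ∈ Finset.range n, T j = T p1 + T p2 := by
  rw [← Finset.sum_subset (show ({p1, p2} : Finset ℕ) ⊆ Finset.range n by
      intro x hx; simp only [Finset.mem_insert, Finset.mem_singleton] at hx
      rcases hx with rfl|rfl <;> simp <;> omega)
    (fun x hx hnx => by
      simp only [Finset.mem_insert, Finset.mem_singleton, not_or] at hnx
      exact h0 x (Finset.mem_range.1 hx) hnx.1 hnx.2)]
  rw [Finset.sum_insert (by simp; omega), Finset.sum_singleton]

lemma sum3 {n p1 p2 p3 : ℕ} (T : ℕ → ℝ) (h12 : p1 < p2) (h23 : p2 < p3) (h3 : p3 < n)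
    (h0 : ∀ j, j < n → j ≠ p1 → j ≠ p2 → j ≠ p3 → T j = 0) :
    ∑ j ∈ Finset.range n, T j = T p1 + T p2 + T p3 := by
  rw [← Finset.sum_subset (show ({p1, p2, p3} : Finset ℕ) ⊆ Finset.range n by
      intro x hx; simp only [Finset.mem_insert, Finset.mem_singleton] at hx
      rcases hx with rfl|rfl|rfl <;> simp <;> omega)
    (fun x hx hnx => by
      simp only [Finset.mem_insert, Finset.mem_singleton, not_or] at hnx
      exact h0 x (Finset.mem_range.1 hx) hnx.1 hnx.2.1 hnx.2.2)]
  rw [Finset.sum_insert (by simp; omega), Finset.sum_insert (by simp; omega),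
    Finset.sum_singleton, add_assoc]

lemma sum4 {n p1 p2 p3 p4 : ℕ} (T : ℕ → ℝ) (h12 : p1 < p2) (h23 : p2 < p3) (h34 : p3 < p4)
    (h4 : p4 < n)
    (h0 : ∀ j, j < n → j ≠ p1 → j ≠ p2 → j ≠ p3 → j ≠ p4 → T j = 0) :
    ∑ j ∈ Finset.range n, T j = T p1 + T p2 + T p3 + T p4 := by
  rw [← Finset.sum_subset (show ({p1, p2, p3, p4} : Finset ℕ) ⊆ Finset.range n by
      intro x hx; simp only [Finset.mem_insert, Finset.mem_singleton] at hx
      rcases hx with rfl|rfl|rfl|rfl <;> simp <;> omega)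
    (fun x hx hnx => by
      simp only [Finset.mem_insert, Finset.mem_singleton, not_or] at hnx
      exact h0 x (Finset.mem_range.1 hx) hnx.1 hnx.2.1 hnx.2.2.1 hnx.2.2.2)]
  rw [Finset.sum_insert (by simp; omega), Finset.sum_insert (by simp; omega),
    Finset.sum_insert (by simp; omega), Finset.sum_singleton, add_assoc, add_assoc]

noncomputable def Vf (n j : ℕ) : ℝ := Wf ((n:ℤ)-1) (j:ℤ) / (5 * ll ((n:ℤ)-1))

lemma hmain (n : ℕ) (hn : 5 ≤ n) :
    (lap (linear2Tree n)).mulVec (fun b : Fin n => Vf n b.val)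
      = esrc (⟨0, by omega⟩ : Fin n) ⟨n-1, by omega⟩ := by
  have hm0 : (0:ℤ) ≤ (n:ℤ) - 1 := by omega
  have hll : ll ((n:ℤ)-1) ≠ 0 := (ll_pos hm0).ne'
  funext a
  rw [mulVec_lap]
  set T : ℕ → ℝ := fun j =>
      if (a.val ≠ j ∧ a.val ≤ j + 2 ∧ j ≤ a.val + 2 ∧ j < n) then Vf n a.val - Vf n j else 0
    with hT
  have hTj : ∀ j, T j = if (a.val ≠ j ∧ a.val ≤ j + 2 ∧ j ≤ a.val + 2 ∧ j < n)
      then Vf n a.val - Vf n j else 0 := fun j => rfl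
  have hTb : ∀ b : Fin n,
      (if (linear2Tree n).Adj a b then Vf n a.val - Vf n b.val else 0) = T b.val := by
    intro b
    rw [hTj b.val]
    by_cases h : (linear2Tree n).Adj a b
    · obtain ⟨h1, h2, h3⟩ := h
      rw [if_pos ⟨h1, h2, h3⟩, if_pos ⟨fun he => h1 (Fin.ext he), h2, h3, b.isLt⟩]
    · rw [if_neg h, if_neg]
      intro ⟨h1, h2, h3, _⟩
      exact h ⟨fun he => h1 (congrArg Fin.val he), h2, h3⟩
  rw [Finset.sum_congr rfl fun b _ => hTb b, Fin.sum_univ_eq_sum_range]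
  simp only [esrc]
  have hai : (a = (⟨0, by omega⟩ : Fin n)) ↔ a.val = 0 := Fin.ext_iff
  have haj : (a = (⟨n-1, by omega⟩ : Fin n)) ↔ a.val = n-1 := Fin.ext_iff
  have han : a.val < n := a.isLt
  rcases (by omega : a.val = 0 ∨ a.val = 1 ∨ (2 ≤ a.val ∧ a.val ≤ n-3) ∨ a.val = n-2 ∨ a.val = n-1)
    with h | h | h | h | h
  · -- a = 0 : neighbors 1, 2
    have h0 : ∀ j, j < n → j ≠ 1 → j ≠ 2 → T j = 0 := by
      intro j hj h1 h2; rw [hTj j]; split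
      · exfalso; omega
      · rfl
    rw [sum2 T (by omega) (by omega) h0, hTj 1, hTj 2, if_pos (by omega), if_pos (by omega),
      if_pos (hai.2 h), if_neg (fun hh => by have := haj.1 hh; omega), h]
    unfold Vf
    push_cast
    field_simp
    linear_combination lemW0 ((n:ℤ)-1)
  · -- a = 1 : neighbors 0, 2, 3
    have h0 : ∀ j, j < n → j ≠ 0 → j ≠ 2 → j ≠ 3 → T j = 0 := by
      intro j hj h1 h2 h3; rw [hTj j]; split
      · exfalso; omega
      · rfl
    rw [sum3 T (by omega) (by omega) (by omega) h0, hTj 0, hTj 2, hTj 3,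
      if_pos (by omega), if_pos (by omega), if_pos (by omega),
      if_neg (fun hh => by have := hai.1 hh; omega),
      if_neg (fun hh => by have := haj.1 hh; omega), h]
    unfold Vf
    push_cast
    field_simp
    linear_combination lemW1 ((n:ℤ)-1)
  · -- middle
    have h0 : ∀ j, j < n → j ≠ a.val - 2 → j ≠ a.val - 1 → j ≠ a.val + 1 → j ≠ a.val + 2 →
        T j = 0 := by
      intro j hj h1 h2 h3 h4; rw [hTj j]; split
      · exfalso; omega
      · rfl
    rw [sum4 T (by omega) (by omega) (by omega) (by omega) h0,
      hTj (a.val - 2), hTj (a.val - 1), hTj (a.val + 1), hTj (a.val + 2),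
      if_pos (by omega), if_pos (by omega), if_pos (by omega), if_pos (by omega),
      if_neg (fun hh => by have := hai.1 hh; omega),
      if_neg (fun hh => by have := haj.1 hh; omega)]
    unfold Vf
    have c1 : ((a.val - 2 : ℕ) : ℤ) = (a.val : ℤ) - 2 := by omega
    have c2 : ((a.val - 1 : ℕ) : ℤ) = (a.val : ℤ) - 1 := by omega
    push_cast [c1, c2]
    field_simp
    linear_combination lemWmid ((n:ℤ)-1) ((a.val : ℤ))
  · -- a = n-2 : neighbors n-4, n-3, n-1
    have h0 : ∀ j, j < n → j ≠ n-4 → j ≠ n-3 → j ≠ n-1 → T j = 0 := by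
      intro j hj h1 h2 h3; rw [hTj j]; split
      · exfalso; omega
      · rfl
    rw [sum3 T (by omega) (by omega) (by omega) h0, hTj (n-4), hTj (n-3), hTj (n-1),
      if_pos (by omega), if_pos (by omega), if_pos (by omega),
      if_neg (fun hh => by have := hai.1 hh; omega),
      if_neg (fun hh => by have := haj.1 hh; omega), h]
    unfold Vf
    have c1 : ((n - 4 : ℕ) : ℤ) = ((n:ℤ) - 1) - 3 := by omega
    have c2 : ((n - 3 : ℕ) : ℤ) = ((n:ℤ) - 1) - 2 := by omega
    have c3 : ((n - 2 : ℕ) : ℤ) = ((n:ℤ) - 1) - 1 := by omega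
    have c4 : ((n - 1 : ℕ) : ℤ) = ((n:ℤ) - 1) := by omega
    push_cast [c1, c2, c3, c4]
    field_simp
    linear_combination lemW2 ((n:ℤ)-1)
  · -- a = n-1 : neighbors n-3, n-2
    have h0 : ∀ j, j < n → j ≠ n-3 → j ≠ n-2 → T j = 0 := by
      intro j hj h1 h2; rw [hTj j]; split
      · exfalso; omega
      · rfl
    rw [sum2 T (by omega) (by omega) h0, hTj (n-3), hTj (n-2),
      if_pos (by omega), if_pos (by omega),
      if_neg (fun hh => by have := hai.1 hh; omega),
      if_pos (haj.2 h), h]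
    unfold Vf
    have c2 : ((n - 3 : ℕ) : ℤ) = ((n:ℤ) - 1) - 2 := by omega
    have c3 : ((n - 2 : ℕ) : ℤ) = ((n:ℤ) - 1) - 1 := by omega
    have c4 : ((n - 1 : ℕ) : ℤ) = ((n:ℤ) - 1) := by omega
    push_cast [c2, c3, c4]
    field_simp
    linear_combination lemWlast ((n:ℤ)-1)

noncomputable def Q (k : ℕ) : ℝ := ff (k:ℤ) / ll (k:ℤ)

lemma Qval (k : ℕ) : Q k = (1 - (psi/phi)^k)/(Real.sqrt 5 * (1 + (psi/phi)^k)) := by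
  have hp : (0:ℝ) < phi ^ k := pow_pos phi_pos k
  have h3 : (0:ℝ) < phi ^ k + psi ^ k := by
    have := ll_pos (t := (k:ℤ)) (by positivity)
    unfold ll at this; rwa [zpow_natCast, zpow_natCast] at this
  have h5 : (1:ℝ) + (psi/phi)^k ≠ 0 := by
    rw [div_pow]
    have : (1:ℝ) + psi^k/phi^k = (phi^k + psi^k)/phi^k := by field_simp
    rw [this]
    positivity
  unfold Q ff ll
  rw [zpow_natCast, zpow_natCast, div_pow]
  have h6 : (1:ℝ) + psi^k/phi^k ≠ 0 := by rw [← div_pow]; exact h5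
  rw [div_div, div_eq_div_iff (by positivity) (mul_ne_zero sqrt5_pos.ne' h6)]
  field_simp

lemma hQlim : Filter.Tendsto Q Filter.atTop (nhds (1/Real.sqrt 5)) := by
  have habs : |psi/phi| < 1 := by
    rw [abs_div, abs_of_pos phi_pos, div_lt_one phi_pos, abs_lt]
    constructor <;> nlinarith [psi_neg, psi_gt, phi_gt]
  have h0 : Filter.Tendsto (fun k : ℕ => (psi/phi)^k) Filter.atTop (nhds 0) :=
    tendsto_pow_atTop_nhds_zero_of_abs_lt_one habs
  have h1 : Filter.Tendsto (fun k : ℕ => (1 - (psi/phi)^k)/(Real.sqrt 5 * (1 + (psi/phi)^k)))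
      Filter.atTop (nhds ((1 - 0)/(Real.sqrt 5 * (1 + 0)))) := by
    apply Filter.Tendsto.div
    · exact (tendsto_const_nhds).sub h0
    · exact (tendsto_const_nhds).mul ((tendsto_const_nhds).add h0)
    · simp [sqrt5_pos.ne']
  have : ((1:ℝ) - 0)/(Real.sqrt 5 * (1 + 0)) = 1/Real.sqrt 5 := by norm_num
  rw [this] at h1
  exact h1.congr (fun k => (Qval k).symm)

lemma rform (n : ℕ) (hn : 5 ≤ n) (rv : ℝ)
    (h : IsResistance (linear2Tree n) ⟨0, by omega⟩ ⟨n - 1, by omega⟩ rv) :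
    rv = ((n:ℝ)-1)/5 + (4/5) * Q (n-1) := by
  have hm0 : (0:ℤ) ≤ (n:ℤ) - 1 := by omega
  have hll : ll ((n:ℤ)-1) ≠ 0 := (ll_pos hm0).ne'
  have hv := h.2 (fun b => Vf n b.val) (hmain n hn)
  simp only [] at hv
  have hc : ((n-1:ℕ):ℤ) = (n:ℤ)-1 := by omega
  have hV1 : Vf n ((⟨n-1, by omega⟩ : Fin n)).val = 0 := by
    show Vf n (n-1) = 0
    unfold Vf
    rw [hc, lemWm, zero_div]
  have hV0 : Vf n ((⟨0, by omega⟩ : Fin n)).val = ((n:ℝ)-1)/5 + (4/5) * Q (n-1) := by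
    show Vf n 0 = _
    unfold Vf Wf Q
    rw [hc]
    push_cast
    norm_num
    field_simp
    ring
  rw [hv, hV0, hV1, sub_zero]

/-- If `r n` is the resistance distance between the extreme vertices of the
straight linear 2-tree on `n` vertices (for `n ≥ 3`), then `r (n+1) - r n → 1/5`. -/
theorem stmt4 (r : ℕ → ℝ)
    (hr : ∀ n (hn : 3 ≤ n),
      IsResistance (linear2Tree n) ⟨0, by omega⟩ ⟨n - 1, by omega⟩ (r n)) :
    Filter.Tendsto (fun n => r (n + 1) - r n) Filter.atTop (nhds (1 / 5)) := by



  have hg : Filter.Tendsto (fun n : ℕ => Q n - Q (n-1)) Filter.atTop (nhds 0) := by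
    have h2 : Filter.Tendsto (fun n : ℕ => Q (n-1)) Filter.atTop (nhds (1/Real.sqrt 5)) :=
      hQlim.comp (Filter.tendsto_sub_atTop_nat 1)
    have := hQlim.sub h2
    rwa [sub_self] at this
  have hlim : Filter.Tendsto (fun n : ℕ => 1/5 + (4/5)*(Q n - Q (n-1))) Filter.atTop
      (nhds (1/5 + (4/5)*0)) := by
    exact (tendsto_const_nhds).add ((tendsto_const_nhds).mul hg)
  rw [show (1:ℝ)/5 + (4/5)*0 = 1/5 by norm_num] at hlim
  apply hlim.congr'
  filter_upwards [Filter.eventually_ge_atTop 5] with n hn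
  have h1 := rform n hn (r n) (hr n (by omega))
  have h2 := rform (n+1) (by omega) (r (n+1)) (hr (n+1) (by omega))
  rw [h1, h2]
  have : (n+1) - 1 = n := by omega
  rw [this]
  push_cast
  ring
end

section
/- Let G be a connected simple graph with a positive weight w(e) on each edge, and suppose v is a cut vertex of G. Let C be a connected component of the graph G − v obtained by deleting v, and let H be the induced weighted subgraph of G on the vertex set V(C) ∪ {v}. Then for every pair of vertices i, j of H, the resistance distances agree: r_G(i, j) = r_H(i, j). -/
open scoped Classical

/-- The weighted Laplacian of a graph `G` with edge weights `w`. -/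
noncomputable def wlap {V : Type*} [Fintype V] [DecidableEq V]
    (G : SimpleGraph V) (w : V → V → ℝ) : Matrix V V ℝ :=
  Matrix.of fun a b =>
    if a = b then ∑ c : V, (if G.Adj a c then w a c else 0)
    else if G.Adj a b then -(w a b) else 0

/-- The source vector `e_i - e_j`. -/
def wesrc {V : Type*} [DecidableEq V] (i j : V) : V → ℝ :=
  fun t => (if t = i then 1 else 0) - (if t = j then 1 else 0)

/-- `IsWResistance G w i j r` says the resistance distance between `i` and `j` in the weighted
graph `(G, w)` is `r`: a solution `v` of `L v = e_i - e_j` exists and every such solution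
satisfies `r = v i - v j`. -/
def IsWResistance {V : Type*} [Fintype V] [DecidableEq V]
    (G : SimpleGraph V) (w : V → V → ℝ) (i j : V) (r : ℝ) : Prop :=
  (∃ v : V → ℝ, (wlap G w).mulVec v = wesrc i j) ∧
  ∀ v : V → ℝ, (wlap G w).mulVec v = wesrc i j → r = v i - v j

lemma wlap_mulVec {V : Type*} [Fintype V] [DecidableEq V]
    (G : SimpleGraph V) (w : V → V → ℝ) (v : V → ℝ) (a : V) :
    (wlap G w).mulVec v a = ∑ b, (if G.Adj a b then w a b * (v a - v b) else 0) := by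
  classical
  have h1 : ∀ b, wlap G w a b =
      (if a = b then (∑ c, if G.Adj a c then w a c else 0) else 0)
        + (if G.Adj a b then -(w a b) else 0) := by
    intro b
    simp only [wlap, Matrix.of_apply]
    by_cases hab : a = b
    · subst hab; simp [G.irrefl]
    · simp [hab]
  simp only [Matrix.mulVec, dotProduct, h1, add_mul, Finset.sum_add_distrib]
  rw [show (∑ b, (if a = b then (∑ c, if G.Adj a c then w a c else 0) else 0) * v b)
      = (∑ c, if G.Adj a c then w a c else 0) * v a by
    rw [show (∑ b, (if a = b then (∑ c, if G.Adj a c then w a c else 0) else 0) * v b)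
        = ∑ b, (if a = b then (∑ c, if G.Adj a c then w a c else 0) * v b else 0) from
      Finset.sum_congr rfl fun b _ => by split <;> simp]
    rw [Finset.sum_ite_eq Finset.univ a (fun b => (∑ c, if G.Adj a c then w a c else 0) * v b)]
    simp]
  rw [Finset.sum_mul, ← Finset.sum_add_distrib]
  refine Finset.sum_congr rfl fun b _ => ?_
  by_cases h : G.Adj a b <;> simp [h] <;> ring

lemma wlap_mulVec_sum {V : Type*} [Fintype V] [DecidableEq V]
    (G : SimpleGraph V) (w : V → V → ℝ) (hsymm : ∀ i j, w i j = w j i) (v : V → ℝ) :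
    ∑ a, (wlap G w).mulVec v a = 0 := by
  simp only [wlap_mulVec]
  have key : ∀ a b : V, (if G.Adj a b then w a b * (v a - v b) else 0)
      = -(if G.Adj b a then w b a * (v b - v a) else 0) := by
    intro a b
    by_cases h : G.Adj a b
    · rw [if_pos h, if_pos h.symm, hsymm a b]; ring
    · rw [if_neg h, if_neg (fun h' => h h'.symm), neg_zero]
  have h2 : (∑ a : V, ∑ b : V, (if G.Adj a b then w a b * (v a - v b) else 0))
      = -∑ a : V, ∑ b : V, (if G.Adj a b then w a b * (v a - v b) else 0) := by
    conv_lhs => rw [Finset.sum_comm]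
    rw [← Finset.sum_neg_distrib]
    refine Finset.sum_congr rfl fun a _ => ?_
    rw [← Finset.sum_neg_distrib]
    exact Finset.sum_congr rfl fun b _ => key b a
  linarith

lemma wesrc_sum {V : Type*} [Fintype V] [DecidableEq V] (i j : V) :
    ∑ a, wesrc i j a = 0 := by
  simp [wesrc, Finset.sum_sub_distrib]

section structural
variable {V : Type*} [Fintype V] [DecidableEq V]
  (G : SimpleGraph V) (x : V)
  (C : SimpleGraph.ConnectedComponent (G.induce {u : V | u ≠ x}))
  (S : Set V)

lemma mem_S_of_adj
    (hS : S = {u : V | u = x ∨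
      ∃ h : u ≠ x, (G.induce {u : V | u ≠ x}).connectedComponentMk ⟨u, h⟩ = C})
    {a : V} (ha : a ∈ S) (hax : a ≠ x) {b : V} (hab : G.Adj a b) : b ∈ S := by
  subst hS
  by_cases hbx : b = x
  · exact Or.inl hbx
  · obtain ⟨h, hc⟩ := ha.resolve_left hax
    refine Or.inr ⟨hbx, ?_⟩
    rw [← hc]
    exact SimpleGraph.ConnectedComponent.sound
      (SimpleGraph.Adj.reachable (by simpa using hab.symm :
        (G.induce {u : V | u ≠ x}).Adj ⟨b, hbx⟩ ⟨a, h⟩))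

lemma adj_eq_x_of_notMem
    (hS : S = {u : V | u = x ∨
      ∃ h : u ≠ x, (G.induce {u : V | u ≠ x}).connectedComponentMk ⟨u, h⟩ = C})
    {a : V} (ha : a ∉ S) {b : V} (hb : b ∈ S) (hab : G.Adj a b) : b = x := by
  by_contra hbx
  exact ha (mem_S_of_adj G x C S hS hb hbx hab.symm)

end structural

set_option linter.unusedSectionVars false

section sols
variable {V : Type*} [Fintype V] [DecidableEq V]
  (G : SimpleGraph V) (w : V → V → ℝ) (x : V)
  (C : SimpleGraph.ConnectedComponent (G.induce {u : V | u ≠ x}))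
  (S : Set V)

lemma wesrc_subtype (i j : V) (hi : i ∈ S) (hj : j ∈ S) (a : ↥S) :
    wesrc (⟨i, hi⟩ : ↥S) ⟨j, hj⟩ a = wesrc i j a.val := by
  simp [wesrc, Subtype.ext_iff]

lemma restrict_sol (hsymm : ∀ i j, w i j = w j i)
    (hS : S = {u : V | u = x ∨
      ∃ h : u ≠ x, (G.induce {u : V | u ≠ x}).connectedComponentMk ⟨u, h⟩ = C})
    (i j : V) (hi : i ∈ S) (hj : j ∈ S)
    (v : V → ℝ) (hv : (wlap G w).mulVec v = wesrc i j) :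
    (wlap (G.induce S) (fun a b => w a b)).mulVec (fun s => v s.val)
      = wesrc (⟨i, hi⟩ : ↥S) ⟨j, hj⟩ := by
  have hxS : x ∈ S := by rw [hS]; exact Or.inl rfl
  set g : ↥S → ℝ := fun a =>
    (wlap (G.induce S) (fun a b => w a b)).mulVec (fun s => v s.val) a
      - wesrc (⟨i, hi⟩ : ↥S) ⟨j, hj⟩ a with hg
  have claim1 : ∀ a : ↥S, a.val ≠ x → g a = 0 := by
    intro a hax
    have e1 : (wlap (G.induce S) (fun a b => w a b)).mulVec (fun s => v s.val) a
        = ∑ b : ↥S, (if G.Adj a.val b.val then w a.val b.val * (v a.val - v b.val) else 0) := by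
      rw [wlap_mulVec]
      exact Finset.sum_congr rfl fun b _ => by simp
    have e2 : (∑ b : ↥S, (if G.Adj a.val b.val then w a.val b.val * (v a.val - v b.val) else 0))
        = ∑ b : V, (if G.Adj a.val b then w a.val b * (v a.val - v b) else 0) := by
      rw [← Finset.sum_subtype S.toFinset (fun b => Set.mem_toFinset)
        (fun b => if G.Adj a.val b then w a.val b * (v a.val - v b) else 0)]
      refine Finset.sum_subset (Finset.subset_univ _) fun b _ hb => ?_
      rw [if_neg]
      intro hadj
      exact hb (Set.mem_toFinset.mpr (mem_S_of_adj G x C S hS a.2 hax hadj))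
    have e3 : (∑ b : V, (if G.Adj a.val b then w a.val b * (v a.val - v b) else 0))
        = wesrc i j a.val := by rw [← wlap_mulVec, hv]
    rw [hg]
    simp only [e1, e2, e3, wesrc_subtype, sub_self]
  have claim2 : ∑ a : ↥S, g a = 0 := by
    rw [hg]
    simp only [Finset.sum_sub_distrib]
    rw [wlap_mulVec_sum (G.induce S) (fun a b => w a.val b.val)
      (fun a b => hsymm a.val b.val), wesrc_sum, sub_zero]
  have claim3 : g ⟨x, hxS⟩ = 0 := by
    rw [← claim2]
    exact (Finset.sum_eq_single _ (fun b _ hb => claim1 b (by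
      simpa [Subtype.ext_iff] using hb)) (by simp)).symm
  funext a
  have : g a = 0 := by
    by_cases hax : a.val = x
    · have : a = ⟨x, hxS⟩ := Subtype.ext hax
      rw [this]; exact claim3
    · exact claim1 a hax
  have := sub_eq_zero.mp this
  exact this

lemma extend_sol (hsymm : ∀ i j, w i j = w j i)
    (hS : S = {u : V | u = x ∨
      ∃ h : u ≠ x, (G.induce {u : V | u ≠ x}).connectedComponentMk ⟨u, h⟩ = C})
    (hxS : x ∈ S)
    (i j : V) (hi : i ∈ S) (hj : j ∈ S)
    (u : ↥S → ℝ)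
    (hu : (wlap (G.induce S) (fun a b => w a b)).mulVec u = wesrc (⟨i, hi⟩ : ↥S) ⟨j, hj⟩) :
    (wlap G w).mulVec (fun a => if h : a ∈ S then u ⟨a, h⟩ else u ⟨x, hxS⟩) = wesrc i j := by
  set vext : V → ℝ := fun a => if h : a ∈ S then u ⟨a, h⟩ else u ⟨x, hxS⟩ with hvext
  funext a
  rw [wlap_mulVec]
  by_cases ha : a ∈ S
  · have e2 : (∑ b : V, (if G.Adj a b then w a b * (vext a - vext b) else 0))
        = ∑ b : ↥S, (if G.Adj a b.val then w a b.val * (vext a - vext b.val) else 0) := by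
      rw [← Finset.sum_subtype S.toFinset (fun b => Set.mem_toFinset)
        (fun b => if G.Adj a b then w a b * (vext a - vext b) else 0)]
      refine (Finset.sum_subset (Finset.subset_univ _) fun b _ hb => ?_).symm
      have hbS : b ∉ S := fun h => hb (Set.mem_toFinset.mpr h)
      by_cases hadj : G.Adj a b
      · have hax : a = x := adj_eq_x_of_notMem G x C S hS hbS ha hadj.symm
        rw [if_pos hadj, hvext]
        simp only [dif_pos ha, dif_neg hbS]
        have : (⟨a, ha⟩ : ↥S) = ⟨x, hxS⟩ := Subtype.ext hax
        rw [this, sub_self, mul_zero]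
      · rw [if_neg hadj]
    have e3 : (∑ b : ↥S, (if G.Adj a b.val then w a b.val * (vext a - vext b.val) else 0))
        = (wlap (G.induce S) (fun a b => w a b)).mulVec u ⟨a, ha⟩ := by
      rw [wlap_mulVec]
      refine Finset.sum_congr rfl fun b _ => ?_
      have hva : vext a = u ⟨a, ha⟩ := dif_pos ha
      have hvb : vext b.val = u b := by rw [hvext]; simp only [dif_pos b.2]
      simp [hva, hvb]
    rw [e2, e3, hu, wesrc_subtype]
  · have hai : a ≠ i := fun h => ha (h ▸ hi)
    have haj : a ≠ j := fun h => ha (h ▸ hj)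
    have : ∀ b : V, (if G.Adj a b then w a b * (vext a - vext b) else 0) = 0 := by
      intro b
      by_cases hadj : G.Adj a b
      · rw [if_pos hadj]
        have hva : vext a = u ⟨x, hxS⟩ := dif_neg ha
        have hvb : vext b = u ⟨x, hxS⟩ := by
          by_cases hbS : b ∈ S
          · have hbx : b = x := adj_eq_x_of_notMem G x C S hS ha hbS hadj
            rw [hvext]; simp only [dif_pos hbS]
            congr 1
            exact Subtype.ext hbx
          · exact dif_neg hbS
        rw [hva, hvb, sub_self, mul_zero]
      · rw [if_neg hadj]
    rw [Finset.sum_eq_zero fun b _ => this b]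
    simp [wesrc, hai, haj]

end sols

/-- **Cut Vertex.** Let `G` be a connected weighted graph with positive edge
weights `w`, let `x` be a cut vertex of `G`, let `C` be a connected component of `G - x`, and
let `H` be the induced weighted subgraph on `S = V(C) ∪ {x}`. Then for all vertices `i, j` of
`H`, the resistance distances in `G` and `H` agree. -/
theorem stmt6 {V : Type*} [Fintype V] [DecidableEq V]
    (G : SimpleGraph V) (hconn : G.Connected)
    (w : V → V → ℝ) (hsymm : ∀ i j, w i j = w j i)
    (hpos : ∀ i j, G.Adj i j → 0 < w i j)
    (x : V) (hcut : ¬ (G.induce {u : V | u ≠ x}).Connected)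
    (C : SimpleGraph.ConnectedComponent (G.induce {u : V | u ≠ x}))
    (S : Set V)
    (hS : S = {u : V | u = x ∨
      ∃ h : u ≠ x, (G.induce {u : V | u ≠ x}).connectedComponentMk ⟨u, h⟩ = C})
    (i j : V) (hi : i ∈ S) (hj : j ∈ S) :
    ∀ r : ℝ, IsWResistance G w i j r ↔
      IsWResistance (G.induce S) (fun a b => w a b) (⟨i, hi⟩ : ↥S) ⟨j, hj⟩ r := by
  intro r
  have hxS : x ∈ S := by rw [hS]; exact Or.inl rfl
  constructor
  · rintro ⟨⟨v, hv⟩, huniq⟩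
    constructor
    · exact ⟨fun s => v s.val, restrict_sol G w x C S hsymm hS i j hi hj v hv⟩
    · intro u hu
      have hext := extend_sol G w x C S hsymm hS hxS i j hi hj u hu
      have := huniq _ hext
      simpa only [dif_pos hi, dif_pos hj] using this
  · rintro ⟨⟨u, hu⟩, huniq⟩
    constructor
    · refine ⟨fun a => if h : a ∈ S then u ⟨a, h⟩ else u ⟨x, hxS⟩, ?_⟩
      exact extend_sol G w x C S hsymm hS hxS i j hi hj u hu
    · intro v hv
      exact huniq _ (restrict_sol G w x C S hsymm hS i j hi hj v hv)
end

section
/- Define rational sequences (s_k), (b_k), (t_k) for k ≥ 1 by s_1 = b_1 = t_1 = 1/3 and, for k ≥ 2, with D_k = b_{k−1} + (s_{k−1} + 1) + 1: b_k = (s_{k−1} + 1)/D_k, s_k = b_{k−1}/D_k, and t_k = b_{k−1}·(s_{k−1} + 1)/D_k. Then for every p ≥ 1, s_p = F_p² / F_{2p+2}, b_p = F_{p+1} / L_{p+1}, and t_p = F_p·F_{p+1} / (L_p·L_{p+1}). -/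
lemma lucas_succ (n : ℕ) : lucas (n + 1) = Nat.fib n + Nat.fib (n + 2) := by
  induction n using Nat.twoStepInduction with
  | zero => decide
  | one => decide
  | more n ih1 ih2 =>
    have h : lucas (n + 3) = lucas (n + 2) + lucas (n + 1) := rfl
    rw [h, ih1, ih2]
    simp [Nat.fib_add_two]
    omega

lemma fib_two_mul_add_two (n : ℕ) : Nat.fib (2 * n + 2) = Nat.fib (n + 1) * lucas (n + 1) := by
  have h := Nat.fib_add n (n + 1)
  have h2 : n + (n + 1) + 1 = 2 * n + 2 := by omega
  rw [h2] at h
  rw [h, lucas_succ]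
  ring

/-- If `s, b, t` are the rational sequences with
`s 1 = b 1 = t 1 = 1/3` and, for `k ≥ 2` with `D_k = b_{k-1} + (s_{k-1} + 1) + 1`:
`b k = (s_{k-1} + 1)/D_k`, `s k = b_{k-1}/D_k`, `t k = b_{k-1}(s_{k-1}+1)/D_k`, then for every
`p ≥ 1`: `s p = F_p²/F_{2p+2}`, `b p = F_{p+1}/L_{p+1}`, `t p = F_p F_{p+1}/(L_p L_{p+1})`. -/
theorem stmt7 (s b t : ℕ → ℚ)
    (hs1 : s 1 = 1 / 3) (hb1 : b 1 = 1 / 3) (ht1 : t 1 = 1 / 3)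
    (hb : ∀ k, 2 ≤ k →
      b k = (s (k - 1) + 1) / (b (k - 1) + (s (k - 1) + 1) + 1))
    (hs : ∀ k, 2 ≤ k →
      s k = b (k - 1) / (b (k - 1) + (s (k - 1) + 1) + 1))
    (ht : ∀ k, 2 ≤ k →
      t k = b (k - 1) * (s (k - 1) + 1) / (b (k - 1) + (s (k - 1) + 1) + 1)) :
    ∀ p, 1 ≤ p →
      s p = (Nat.fib p : ℚ) ^ 2 / (Nat.fib (2 * p + 2) : ℚ) ∧
      b p = (Nat.fib (p + 1) : ℚ) / (lucas (p + 1) : ℚ) ∧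
      t p = (Nat.fib p : ℚ) * (Nat.fib (p + 1) : ℚ) /
        ((lucas p : ℚ) * (lucas (p + 1) : ℚ)) := by
  intro p hp
  induction p, hp using Nat.le_induction with
  | base =>
    refine ⟨?_, ?_, ?_⟩ <;>
      norm_num [hs1, hb1, ht1, show Nat.fib 1 = 1 from rfl, show Nat.fib 2 = 1 from rfl,
        show Nat.fib 4 = 3 from rfl, show lucas 1 = 1 from rfl, show lucas 2 = 3 from rfl]
  | succ p hp ih =>
    obtain ⟨hS, hB, hT⟩ := ih
    set A : ℚ := (Nat.fib p : ℚ) with hAdef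
    set C : ℚ := (Nat.fib (p + 1) : ℚ) with hCdef
    have hA : 0 < A := by
      have h : 0 < Nat.fib p := Nat.fib_pos.mpr (by omega)
      rw [hAdef]
      exact_mod_cast h
    have hC : 0 < C := by
      have h : 0 < Nat.fib (p + 1) := Nat.fib_pos.mpr (by omega)
      rw [hCdef]
      exact_mod_cast h
    -- basic cast identities
    have h1 : (Nat.fib (p + 2) : ℚ) = A + C := by
      rw [Nat.fib_add_two]; push_cast [hAdef, hCdef]; ring
    have h2 : (lucas (p + 1) : ℚ) = 2 * A + C := by
      rw [lucas_succ, Nat.fib_add_two]; push_cast [hAdef, hCdef]; ring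
    have h3 : (lucas (p + 2) : ℚ) = A + 3 * C := by
      rw [lucas_succ]
      have : Nat.fib (p + 3) = Nat.fib (p + 1) + Nat.fib (p + 2) := Nat.fib_add_two
      rw [this, Nat.fib_add_two]
      push_cast [hAdef, hCdef]; ring
    have h4 : (Nat.fib (2 * p + 2) : ℚ) = C * (2 * A + C) := by
      rw [fib_two_mul_add_two]; push_cast; rw [h2, hCdef]
    have h5 : (Nat.fib (2 * (p + 1) + 2) : ℚ) = (A + C) * (A + 3 * C) := by
      have e : 2 * (p + 1) + 2 = 2 * (p + 1) + 2 := rfl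
      rw [show 2 * (p + 1) + 2 = 2 * (p + 1) + 2 from rfl, fib_two_mul_add_two (p + 1)]
      push_cast [← h1, ← h3]; ring
    have hbk := hb (p + 1) (by omega)
    have hsk := hs (p + 1) (by omega)
    have htk := ht (p + 1) (by omega)
    simp only [Nat.add_sub_cancel] at hbk hsk htk
    rw [hS, hB, h4, h2] at hbk hsk htk
    have h2A : (2 * A + C) ≠ 0 := by positivity
    have hCne : C ≠ 0 := ne_of_gt hC
    have hD : C / (2 * A + C) + (A ^ 2 / (C * (2 * A + C)) + 1) + 1 =
        ((A + C) * (A + 3 * C)) / (C * (2 * A + C)) := by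
      field_simp
      ring
    rw [hD] at hbk hsk htk
    have hAC : (A + C) ≠ 0 := by positivity
    have hA3C : (A + 3 * C) ≠ 0 := by positivity
    have e : p + 1 + 1 = p + 2 := rfl
    rw [e]
    refine ⟨?_, ?_, ?_⟩
    · rw [hsk, h5]
      field_simp
    · rw [hbk, h1, h3]
      field_simp
      ring
    · rw [htk, h1, h2, h3]
      field_simp
      ring
end

section
/- Fix an integer p ≥ 0 and define rational sequences (s_{i,p}), (b_{i,p}), (t_{i,p}) for i ≥ 1 by s_{1,p} = F_{2p+1}/F_{2p+4}, b_{1,p} = F_{2p+2}/F_{2p+4}, t_{1,p} = F_{2p+1}/F_{2p+4}, and for i ≥ 2, with D_i = b_{i−1,p} + (s_{i−1,p} + 1) + 1: b_{i,p} = (s_{i−1,p} + 1)/D_i, s_{i,p} = b_{i−1,p}/D_i, t_{i,p} = b_{i−1,p}·(s_{i−1,p} + 1)/D_i. Then for every i ≥ 1, s_{i,p} = F_i·F_{i+2p} / F_{2i+2p+2}, b_{i,p} = F_{i+1}·F_{i+2p+1} / F_{2i+2p+2}, and t_{i,p} = F_i·F_{i+1}·F_{i+2p}·F_{i+2p+1}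 / (F_{2i+2p}·F_{2i+2p+2}). -/
lemma fibA (j k : ℕ) :
    Nat.fib (j+1) * Nat.fib (j+k+1) + Nat.fib j * Nat.fib (j+k) = Nat.fib (2*j+k+1) := by
  have h := Nat.fib_add j (j+k)
  rw [show j+(j+k)+1 = 2*j+k+1 by ring] at h
  rw [h]; exact Nat.add_comm _ _

lemma fibB (j k : ℕ) :
    Nat.fib j * Nat.fib (j+k) + Nat.fib (2*j+k+2) = Nat.fib (j+2) * Nat.fib (j+k+2) := by
  have h := Nat.fib_add (j+1) (j+k)
  rw [show (j+1)+(j+k)+1 = 2*j+k+2 by ring] at h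
  rw [h, Nat.fib_add_two (n := j), Nat.fib_add_two (n := j+k)]
  ring

lemma fibC (n : ℕ) : Nat.fib n + 2 * Nat.fib (n+1) = Nat.fib (n+3) := by
  have h1 : Nat.fib (n+2) = Nat.fib n + Nat.fib (n+1) := Nat.fib_add_two
  have h2 : Nat.fib (n+3) = Nat.fib (n+1) + Nat.fib (n+2) := Nat.fib_add_two (n := n+1)
  omega

lemma fibNZ (n : ℕ) : ((Nat.fib (n+1) : ℚ)) ≠ 0 := by
  exact_mod_cast (Nat.fib_pos.mpr (Nat.succ_pos n)).ne'

/-- Fix `p ≥ 0`. If `s, b, t` are the rational sequences with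
`s 1 = F_{2p+1}/F_{2p+4}`, `b 1 = F_{2p+2}/F_{2p+4}`, `t 1 = F_{2p+1}/F_{2p+4}` and, for
`i ≥ 2` with `D_i = b_{i-1} + (s_{i-1} + 1) + 1`: `b i = (s_{i-1}+1)/D_i`,
`s i = b_{i-1}/D_i`, `t i = b_{i-1}(s_{i-1}+1)/D_i`, then for every `i ≥ 1`:
`s i = F_i F_{i+2p} / F_{2i+2p+2}`, `b i = F_{i+1} F_{i+2p+1} / F_{2i+2p+2}`, and
`t i = F_i F_{i+1} F_{i+2p} F_{i+2p+1} / (F_{2i+2p} F_{2i+2p+2})`. -/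
theorem stmt8 (p : ℕ) (s b t : ℕ → ℚ)
    (hs1 : s 1 = (Nat.fib (2 * p + 1) : ℚ) / (Nat.fib (2 * p + 4) : ℚ))
    (hb1 : b 1 = (Nat.fib (2 * p + 2) : ℚ) / (Nat.fib (2 * p + 4) : ℚ))
    (ht1 : t 1 = (Nat.fib (2 * p + 1) : ℚ) / (Nat.fib (2 * p + 4) : ℚ))
    (hb : ∀ i, 2 ≤ i →
      b i = (s (i - 1) + 1) / (b (i - 1) + (s (i - 1) + 1) + 1))
    (hs : ∀ i, 2 ≤ i →
      s i = b (i - 1) / (b (i - 1) + (s (i - 1) + 1) + 1))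
    (ht : ∀ i, 2 ≤ i →
      t i = b (i - 1) * (s (i - 1) + 1) / (b (i - 1) + (s (i - 1) + 1) + 1)) :
    ∀ i, 1 ≤ i →
      s i = (Nat.fib i : ℚ) * (Nat.fib (i + 2 * p) : ℚ) / (Nat.fib (2 * i + 2 * p + 2) : ℚ) ∧
      b i = (Nat.fib (i + 1) : ℚ) * (Nat.fib (i + 2 * p + 1) : ℚ) /
        (Nat.fib (2 * i + 2 * p + 2) : ℚ) ∧
      t i = (Nat.fib i : ℚ) * (Nat.fib (i + 1) : ℚ) * (Nat.fib (i + 2 * p) : ℚ) *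
          (Nat.fib (i + 2 * p + 1) : ℚ) /
        ((Nat.fib (2 * i + 2 * p) : ℚ) * (Nat.fib (2 * i + 2 * p + 2) : ℚ)) := by
  intro i hi
  induction i, hi using Nat.le_induction with
  | base =>
    have e3 : 1 + 2*p + 1 = 2*p + 2 := by ring
    have e1 : 1 + 2*p = 2*p + 1 := by ring
    have e2 : 2*1 + 2*p + 2 = 2*p + 4 := by ring
    have e4 : 2*1 + 2*p = 2*p + 2 := by ring
    rw [e3, e1, e2, e4]
    have h2 : ((Nat.fib (2*p+2) : ℚ)) ≠ 0 := fibNZ (2*p+1)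
    have h4 : ((Nat.fib (2*p+4) : ℚ)) ≠ 0 := fibNZ (2*p+3)
    refine ⟨by rw [hs1]; norm_num, by rw [hb1]; norm_num, ?_⟩
    rw [ht1]
    field_simp
    ring
  | succ j hj ih =>
    obtain ⟨hsj, hbj, htj⟩ := ih
    have h2 : 2 ≤ j + 1 := by omega
    have hred : j + 1 - 1 = j := rfl
    have C2 : ((Nat.fib (2*j+2*p+2) : ℚ)) ≠ 0 := by
      rw [show 2*j+2*p+2 = (2*j+2*p+1)+1 by ring]; exact fibNZ _
    have C4 : ((Nat.fib (2*j+2*p+4) : ℚ)) ≠ 0 := by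
      rw [show 2*j+2*p+4 = (2*j+2*p+3)+1 by ring]; exact fibNZ _
    have idA : (Nat.fib (j+1) : ℚ) * Nat.fib (j+2*p+1) + Nat.fib j * Nat.fib (j+2*p)
        = Nat.fib (2*j+2*p+1) := by
      exact_mod_cast congrArg (Nat.cast (R := ℚ)) (fibA j (2*p))
    have idB : (Nat.fib j : ℚ) * Nat.fib (j+2*p) + Nat.fib (2*j+2*p+2)
        = Nat.fib (j+2) * Nat.fib (j+2*p+2) := by
      exact_mod_cast congrArg (Nat.cast (R := ℚ)) (fibB j (2*p))
    have idC : (Nat.fib (2*j+2*p+1) : ℚ) + 2 * Nat.fib (2*j+2*p+2) = Nat.fib (2*j+2*p+4) := by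
      have h : Nat.fib (2*j+2*p+1) + 2 * Nat.fib (2*j+2*p+2) = Nat.fib (2*j+2*p+4) :=
        fibC (2*j+2*p+1)
      exact_mod_cast congrArg (Nat.cast (R := ℚ)) h
    have hD : b j + (s j + 1) + 1 = (Nat.fib (2*j+2*p+4) : ℚ) / Nat.fib (2*j+2*p+2) := by
      rw [hbj, hsj]
      field_simp
      linarith [idA, idC]
    have hS1 : s j + 1 = (Nat.fib (j+2) : ℚ) * Nat.fib (j+2*p+2) / Nat.fib (2*j+2*p+2) := by
      rw [hsj]
      field_simp
      linarith [idB]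
    have e3 : j + 1 + 2*p + 1 = j + 2*p + 2 := by ring
    have e1 : j + 1 + 2*p = j + 2*p + 1 := by ring
    have e2 : 2*(j+1) + 2*p + 2 = 2*j + 2*p + 4 := by ring
    have e4 : 2*(j+1) + 2*p = 2*j + 2*p + 2 := by ring
    have e5 : j + 1 + 1 = j + 2 := rfl
    rw [hs (j+1) h2, hb (j+1) h2, ht (j+1) h2, hred, hD, hS1, hbj, e5, e3, e1, e2, e4]
    refine ⟨by field_simp, by field_simp, by field_simp⟩
end
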